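/- arXiv:1206.6541 — 2 statements merged into one kernel-verified Lean document; each statement's English description precedes it below -/
import Mathlib

section
/- There is an absolute constant C > 0 such that for every positive integer d, every ε ∈ (0,1), every positive integer n, and every monotone Boolean function f : {0,1}^n → {0,1} computed by a decision tree of depth at most d, there exists a k-junta g : {0,1}^n → {0,1} with k ≤ exp(C·√d/ε) such that Pr_{x uniform on {0,1}^n}[ f(x) ≠ g(x) ] ≤ ε. -/
/-- Binary decision trees with queries indexed by `ι`. -/
inductive DTree (ι : Type) where
  | leaf : Bool → DTree ι
  | node : ι → DTree ι → DTree ι → DTree ι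

/-- Evaluation of a decision tree: at a node labeled `i`, follow the child given by bit `z i`. -/
def DTree.eval {ι : Type} : DTree ι → (ι → Bool) → Bool
  | .leaf b, _ => b
  | .node i t0 t1, z => if z i then t1.eval z else t0.eval z

/-- The depth of a decision tree: the maximum number of internal nodes on a
root-to-leaf path. -/
def DTree.depth {ι : Type} : DTree ι → ℕ
  | .leaf _ => 0
  | .node _ t0 t1 => 1 + max t0.depth t1.depth

namespace JuntaProof

variable {n : ℕ}

def bsign (b : Bool) : ℝ := if b then 1 else -1

lemma bsign_sq (b : Bool) : bsign b * bsign b = 1 := by cases b <;> simp [bsign]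

lemma bsign_not (b : Bool) : bsign (!b) = - bsign b := by cases b <;> simp [bsign]

def chi (S : Finset (Fin n)) (x : Fin n → Bool) : ℝ := ∏ i ∈ S, bsign (x i)

def W (h : (Fin n → Bool) → ℝ) (S : Finset (Fin n)) : ℝ := ∑ x, h x * chi S x

/-- Flip coordinate `i`. -/
def fl (i : Fin n) (x : Fin n → Bool) : Fin n → Bool := Function.update x i (!x i)

lemma fl_invol (i : Fin n) : Function.Involutive (fl i) := by
  intro x
  funext j
  by_cases hj : j = i
  · subst hj; simp [fl]
  · simp [fl, Function.update_of_ne hj]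

lemma sum_fl (i : Fin n) (F : (Fin n → Bool) → ℝ) :
    ∑ x, F (fl i x) = ∑ x, F x :=
  Fintype.sum_bijective (fl i) (fl_invol i).bijective _ _ (fun _ => rfl)

lemma chi_fl_mem {S : Finset (Fin n)} {i : Fin n} (hi : i ∈ S) (x : Fin n → Bool) :
    chi S (fl i x) = - chi S x := by
  classical
  rw [chi, chi, ← Finset.mul_prod_erase S _ hi, ← Finset.mul_prod_erase S _ hi]
  have h1 : bsign (fl i x i) = - bsign (x i) := by simp [fl, bsign_not]
  have h2 : ∀ j ∈ S.erase i, bsign (fl i x j) = bsign (x j) := by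
    intro j hj
    rw [fl, Function.update_of_ne (Finset.ne_of_mem_erase hj)]
  rw [h1, Finset.prod_congr rfl h2]
  ring

lemma chi_fl_not_mem {S : Finset (Fin n)} {i : Fin n} (hi : i ∉ S) (x : Fin n → Bool) :
    chi S (fl i x) = chi S x := by
  rw [chi, chi]
  apply Finset.prod_congr rfl
  intro j hj
  rw [fl, Function.update_of_ne (by rintro rfl; exact hi hj)]

lemma sum_eq_zero_of_fl_neg {i : Fin n} {u : (Fin n → Bool) → ℝ}
    (h : ∀ x, u (fl i x) = - u x) : ∑ x, u x = 0 := by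
  have := sum_fl i u
  rw [Finset.sum_congr rfl fun x _ => h x, Finset.sum_neg_distrib] at this
  linarith

lemma chi_sq (S : Finset (Fin n)) (x : Fin n → Bool) : chi S x * chi S x = 1 := by
  rw [chi, ← Finset.prod_mul_distrib]
  exact Finset.prod_eq_one fun i _ => bsign_sq _

lemma chi_nonempty_sum (S : Finset (Fin n)) (hS : S.Nonempty) : ∑ x, chi S x = 0 := by
  obtain ⟨i, hi⟩ := hS
  exact sum_eq_zero_of_fl_neg (fun x => chi_fl_mem hi x)

lemma card_cube : (Fintype.card (Fin n → Bool) : ℝ) = 2 ^ n := by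
  rw [Fintype.card_fun]; simp

lemma sum_one_cube : ∑ _x : Fin n → Bool, (1:ℝ) = 2 ^ n := by
  rw [Finset.sum_const, Finset.card_univ, nsmul_eq_mul, mul_one, ← card_cube]

lemma chi_dual (x y : Fin n → Bool) :
    ∑ S ∈ (Finset.univ : Finset (Fin n)).powerset, chi S x * chi S y
      = if x = y then (2 : ℝ) ^ n else 0 := by
  classical
  have key : ∑ S ∈ (Finset.univ : Finset (Fin n)).powerset, chi S x * chi S y
      = ∏ i : Fin n, (bsign (x i) * bsign (y i) + 1) := by
    rw [Finset.prod_add]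
    apply Finset.sum_congr rfl
    intro S _
    simp only [Finset.prod_const_one, mul_one]
    rw [chi, chi, ← Finset.prod_mul_distrib]
  rw [key]
  by_cases hxy : x = y
  · subst hxy
    rw [if_pos rfl]
    have : ∀ i : Fin n, (bsign (x i) * bsign (x i) + 1) = 2 := by
      intro i; rw [bsign_sq]; norm_num
    rw [Finset.prod_congr rfl fun i _ => this i, Finset.prod_const, Finset.card_univ,
      Fintype.card_fin]
  · rw [if_neg hxy]
    obtain ⟨i, hi⟩ : ∃ i, x i ≠ y i := by
      by_contra h
      push_neg at h
      exact hxy (funext h)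
    apply Finset.prod_eq_zero (Finset.mem_univ i)
    cases hx : x i <;> cases hy : y i <;> simp_all [bsign]

lemma expansion (h : (Fin n → Bool) → ℝ) (x : Fin n → Bool) :
    ∑ S ∈ (Finset.univ : Finset (Fin n)).powerset, W h S * chi S x = 2 ^ n * h x := by
  classical
  have step : ∑ S ∈ (Finset.univ : Finset (Fin n)).powerset, W h S * chi S x
      = ∑ y : Fin n → Bool, h y *
          ∑ S ∈ (Finset.univ : Finset (Fin n)).powerset, chi S y * chi S x := by
    simp only [W, Finset.sum_mul, Finset.mul_sum]
    rw [Finset.sum_comm]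
    exact Finset.sum_congr rfl fun y _ => Finset.sum_congr rfl fun S _ => by ring
  rw [step]
  have step2 : ∀ y : Fin n → Bool, h y *
      (∑ S ∈ (Finset.univ : Finset (Fin n)).powerset, chi S y * chi S x)
        = if y = x then 2 ^ n * h y else 0 := by
    intro y
    rw [chi_dual]
    by_cases hyx : y = x <;> simp [hyx, mul_comm]
  rw [Finset.sum_congr rfl fun y _ => step2 y, Finset.sum_ite_eq' Finset.univ x
    (fun y => (2:ℝ)^n * h y)]
  simp

lemma plancherel (h g : (Fin n → Bool) → ℝ) :
    ∑ S ∈ (Finset.univ : Finset (Fin n)).powerset, W h S * W g S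
      = 2 ^ n * ∑ x, h x * g x := by
  classical
  have inner : ∀ x : Fin n → Bool,
      ∑ S ∈ (Finset.univ : Finset (Fin n)).powerset, W h S * (g x * chi S x)
        = 2 ^ n * (h x * g x) := by
    intro x
    have e1 : ∑ S ∈ (Finset.univ : Finset (Fin n)).powerset, W h S * (g x * chi S x)
        = g x * ∑ S ∈ (Finset.univ : Finset (Fin n)).powerset, W h S * chi S x := by
      rw [Finset.mul_sum]
      exact Finset.sum_congr rfl fun S _ => by ring
    rw [e1, expansion]
    ring
  calc ∑ S ∈ (Finset.univ : Finset (Fin n)).powerset, W h S * W g S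
      = ∑ S ∈ (Finset.univ : Finset (Fin n)).powerset, ∑ x : Fin n → Bool,
          W h S * (g x * chi S x) := by
        refine Finset.sum_congr rfl fun S _ => ?_
        rw [show W g S = ∑ x, g x * chi S x from rfl, Finset.mul_sum]
    _ = ∑ x : Fin n → Bool, ∑ S ∈ (Finset.univ : Finset (Fin n)).powerset,
          W h S * (g x * chi S x) := Finset.sum_comm
    _ = ∑ x : Fin n → Bool, 2 ^ n * (h x * g x) :=
        Finset.sum_congr rfl fun x _ => inner x
    _ = 2 ^ n * ∑ x, h x * g x := by rw [Finset.mul_sum]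

lemma chi_mul (S T : Finset (Fin n)) (x : Fin n → Bool) :
    chi S x * chi T x = chi ((S \ T) ∪ (T \ S)) x := by
  classical
  rw [chi, chi, chi, Finset.prod_union disjoint_sdiff_sdiff]
  have hS : S = (S \ T) ∪ (S ∩ T) := (Finset.sdiff_union_inter S T).symm
  have hT : T = (T \ S) ∪ (S ∩ T) := by
    rw [Finset.inter_comm]; exact (Finset.sdiff_union_inter T S).symm
  calc (∏ i ∈ S, bsign (x i)) * ∏ i ∈ T, bsign (x i)
      = ((∏ i ∈ S \ T, bsign (x i)) * ∏ i ∈ S ∩ T, bsign (x i)) *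
        ((∏ i ∈ T \ S, bsign (x i)) * ∏ i ∈ S ∩ T, bsign (x i)) := by
        rw [← Finset.prod_union (Finset.sdiff_disjoint.mono_right Finset.inter_subset_right),
          ← Finset.prod_union (Finset.sdiff_disjoint.mono_right Finset.inter_subset_left),
          ← hS]
        congr 1
        rw [← hT]
    _ = ((∏ i ∈ S \ T, bsign (x i)) * ∏ i ∈ T \ S, bsign (x i)) *
        ((∏ i ∈ S ∩ T, bsign (x i)) * ∏ i ∈ S ∩ T, bsign (x i)) := by ring
    _ = (∏ i ∈ S \ T, bsign (x i)) * ∏ i ∈ T \ S, bsign (x i) := by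
        rw [← Finset.prod_mul_distrib, Finset.prod_congr rfl fun i _ => bsign_sq (x i),
          Finset.prod_const_one, mul_one]

lemma chi_orth (S T : Finset (Fin n)) :
    ∑ x, chi S x * chi T x = if S = T then (2:ℝ) ^ n else 0 := by
  classical
  rw [Finset.sum_congr rfl fun x _ => chi_mul S T x]
  by_cases hST : S = T
  · subst hST
    simp only [Finset.sdiff_self, Finset.empty_union, if_pos rfl]
    calc ∑ x : Fin n → Bool, chi (∅ : Finset (Fin n)) x
        = ∑ _x : Fin n → Bool, (1:ℝ) := Finset.sum_congr rfl fun x _ => by simp [chi]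
      _ = 2 ^ n := sum_one_cube
  · rw [if_neg hST, chi_nonempty_sum]
    rw [Finset.nonempty_iff_ne_empty]
    intro hcon
    rw [Finset.union_eq_empty, Finset.sdiff_eq_empty_iff_subset,
      Finset.sdiff_eq_empty_iff_subset] at hcon
    exact hST (Finset.Subset.antisymm hcon.1 hcon.2)

/-- Discrete derivative. -/
noncomputable def Dv (i : Fin n) (h : (Fin n → Bool) → ℝ) (x : Fin n → Bool) : ℝ :=
  (h (Function.update x i true) - h (Function.update x i false)) / 2

lemma update_fl (i : Fin n) (x : Fin n → Bool) (b : Bool) :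
    Function.update (fl i x) i b = Function.update x i b := by
  rw [fl, Function.update_idem]

lemma Dv_fl (i : Fin n) (h : (Fin n → Bool) → ℝ) (x : Fin n → Bool) :
    Dv i h (fl i x) = Dv i h x := by
  rw [Dv, Dv, update_fl, update_fl]

lemma fl_apply (i : Fin n) (x : Fin n → Bool) : fl i x i = !x i := by
  rw [fl, Function.update_self]

lemma bsign_mul_diff (i : Fin n) (h : (Fin n → Bool) → ℝ) (x : Fin n → Bool) :
    bsign (x i) * (h x - h (fl i x)) = 2 * Dv i h x := by
  cases hx : x i
  · have e1 : Function.update x i true = fl i x := by rw [fl, hx]; rfl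
    have e2 : Function.update x i false = x := by
      rw [← hx, Function.update_eq_self]
    rw [Dv, e1, e2, bsign]
    simp [hx]
    ring
  · have e1 : Function.update x i false = fl i x := by rw [fl, hx]; rfl
    have e2 : Function.update x i true = x := by
      rw [← hx, Function.update_eq_self]
    rw [Dv, e1, e2, bsign]
    simp [hx]
    ring

/-- Pairing lemma: summing `h x * bsign (x i) * v x` equals summing `Dv i h x * v x`
for `v` invariant under flipping coordinate `i`. -/
lemma sum_bsign_eq_sum_Dv (i : Fin n) (h v : (Fin n → Bool) → ℝ)
    (hv : ∀ x, v (fl i x) = v x) :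
    ∑ x, h x * bsign (x i) * v x = ∑ x, Dv i h x * v x := by
  have key : ∀ x, h x * bsign (x i) * v x + h (fl i x) * bsign (fl i x i) * v (fl i x)
      = 2 * (Dv i h x * v x) := by
    intro x
    rw [hv, fl_apply, bsign_not]
    linear_combination v x * bsign_mul_diff i h x
  have e1 : ∑ x, (h x * bsign (x i) * v x + h (fl i x) * bsign (fl i x i) * v (fl i x))
      = 2 * ∑ x, h x * bsign (x i) * v x := by
    rw [Finset.sum_add_distrib]
    rw [sum_fl i (fun y => h y * bsign (y i) * v y)]
    ring
  have e2 : ∑ x, (h x * bsign (x i) * v x + h (fl i x) * bsign (fl i x i) * v (fl i x))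
      = 2 * ∑ x, Dv i h x * v x := by
    rw [Finset.sum_congr rfl fun x _ => key x, ← Finset.mul_sum]
  linarith

lemma chi_insert {S : Finset (Fin n)} {i : Fin n} (hi : i ∉ S) (x : Fin n → Bool) :
    chi (insert i S) x = bsign (x i) * chi S x := by
  rw [chi, chi, Finset.prod_insert hi]

lemma W_Dv (i : Fin n) (h : (Fin n → Bool) → ℝ) (S : Finset (Fin n)) :
    W (Dv i h) S = if i ∈ S then 0 else W h (insert i S) := by
  by_cases hi : i ∈ S
  · rw [if_pos hi, W]
    apply sum_eq_zero_of_fl_neg (i := i)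
    intro x
    rw [Dv_fl, chi_fl_mem hi]
    ring
  · rw [if_neg hi, W, W]
    have : ∀ x, h x * chi (insert i S) x = h x * bsign (x i) * chi S x := by
      intro x
      rw [chi_insert hi]
      ring
    rw [Finset.sum_congr rfl fun x _ => this x,
      sum_bsign_eq_sum_Dv i h (chi S) (fun x => chi_fl_not_mem hi x)]

/-- Influence formula. -/
lemma influence_formula (i : Fin n) (h : (Fin n → Bool) → ℝ) :
    ∑ S ∈ (Finset.univ : Finset (Fin n)).powerset.filter (fun S => i ∈ S), (W h S) ^ 2
      = 2 ^ n * ∑ x, (Dv i h x) ^ 2 := by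
  classical
  have p := plancherel (Dv i h) (Dv i h)
  have e1 : ∑ S ∈ (Finset.univ : Finset (Fin n)).powerset, W (Dv i h) S * W (Dv i h) S
      = ∑ S ∈ (Finset.univ : Finset (Fin n)).powerset.filter (fun S => i ∉ S),
          (W h (insert i S)) ^ 2 := by
    rw [Finset.sum_filter]
    apply Finset.sum_congr rfl
    intro S _
    rw [W_Dv]
    by_cases hi : i ∈ S <;> simp [hi, pow_two]
  have e2 : ∑ S ∈ (Finset.univ : Finset (Fin n)).powerset.filter (fun S => i ∉ S),
          (W h (insert i S)) ^ 2
      = ∑ T ∈ (Finset.univ : Finset (Fin n)).powerset.filter (fun T => i ∈ T),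
          (W h T) ^ 2 := by
    apply Finset.sum_nbij' (fun S => insert i S) (fun T => T.erase i)
    · intro S hS
      simp only [Finset.mem_filter, Finset.mem_powerset] at hS ⊢
      exact ⟨Finset.subset_univ _, Finset.mem_insert_self i S⟩
    · intro T hT
      simp only [Finset.mem_filter, Finset.mem_powerset] at hT ⊢
      exact ⟨Finset.subset_univ _, Finset.notMem_erase i T⟩
    · intro S hS
      simp only [Finset.mem_filter] at hS
      exact Finset.erase_insert hS.2
    · intro T hT
      simp only [Finset.mem_filter] at hT
      exact Finset.insert_erase hT.2
    · intro S _
      rfl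
  have e3 : ∑ x, Dv i h x * Dv i h x = ∑ x, (Dv i h x) ^ 2 :=
    Finset.sum_congr rfl fun x _ => (pow_two _).symm
  rw [← e2, ← e1, p, e3]

/-- Total influence as weighted sum over Fourier coefficients. -/
lemma total_influence (h : (Fin n → Bool) → ℝ) :
    ∑ S ∈ (Finset.univ : Finset (Fin n)).powerset, (S.card : ℝ) * (W h S) ^ 2
      = ∑ i : Fin n, 2 ^ n * ∑ x, (Dv i h x) ^ 2 := by
  classical
  have : ∀ i : Fin n, (2:ℝ) ^ n * ∑ x, (Dv i h x) ^ 2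
      = ∑ S ∈ (Finset.univ : Finset (Fin n)).powerset,
          if i ∈ S then (W h S) ^ 2 else 0 := by
    intro i
    rw [← influence_formula, Finset.sum_filter]
  rw [Finset.sum_congr rfl fun i _ => this i, Finset.sum_comm]
  apply Finset.sum_congr rfl
  intro S _
  rw [Finset.sum_ite_mem, Finset.univ_inter, Finset.sum_const, nsmul_eq_mul]


/-! ### Decision trees -/

variable {ι : Type} [DecidableEq ι]

def vars : DTree ι → Finset ι
  | .leaf _ => ∅
  | .node i t0 t1 => insert i (vars t0 ∪ vars t1)

def Reduced : DTree ι → Prop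
  | .leaf _ => True
  | .node i t0 t1 => i ∉ vars t0 ∧ i ∉ vars t1 ∧ Reduced t0 ∧ Reduced t1

def reduce : DTree ι → (ι → Option Bool) → DTree ι
  | .leaf b, _ => .leaf b
  | .node i t0 t1, σ => match σ i with
    | some true => reduce t1 σ
    | some false => reduce t0 σ
    | none => .node i (reduce t0 (Function.update σ i (some false)))
        (reduce t1 (Function.update σ i (some true)))

lemma depth_reduce (t : DTree ι) (σ : ι → Option Bool) :
    (reduce t σ).depth ≤ t.depth := by
  induction t generalizing σ with
  | leaf b => simp [reduce]
  | node i t0 t1 ih0 ih1 =>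
    rw [reduce]
    match hσ : σ i with
    | some true =>
      simp only [DTree.depth]
      exact le_trans (ih1 σ) (by omega)
    | some false =>
      simp only [DTree.depth]
      exact le_trans (ih0 σ) (by omega)
    | none =>
      simp only [DTree.depth]
      have h0 := ih0 (Function.update σ i (some false))
      have h1 := ih1 (Function.update σ i (some true))
      omega

lemma vars_reduce (t : DTree ι) (σ : ι → Option Bool) :
    ∀ j ∈ vars (reduce t σ), σ j = none := by
  induction t generalizing σ with
  | leaf b => simp [reduce, vars]
  | node i t0 t1 ih0 ih1 =>
    intro j hj
    rw [reduce] at hj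
    match hσ : σ i with
    | some true => rw [hσ] at hj; exact ih1 σ j hj
    | some false => rw [hσ] at hj; exact ih0 σ j hj
    | none =>
      rw [hσ] at hj
      simp only [vars, Finset.mem_insert, Finset.mem_union] at hj
      rcases hj with rfl | hj | hj
      · exact hσ
      · have := ih0 _ j hj
        by_cases hji : j = i
        · subst hji; rw [Function.update_self] at this; exact absurd this (by simp)
        · rwa [Function.update_of_ne hji] at this
      · have := ih1 _ j hj
        by_cases hji : j = i
        · subst hji; rw [Function.update_self] at this; exact absurd this (by simp)
        · rwa [Function.update_of_ne hji] at this

lemma reduced_reduce (t : DTree ι) (σ : ι → Option Bool) : Reduced (reduce t σ) := by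
  induction t generalizing σ with
  | leaf b => rw [reduce]; trivial
  | node i t0 t1 ih0 ih1 =>
    rw [reduce]
    match hσ : σ i with
    | some true => exact ih1 σ
    | some false => exact ih0 σ
    | none =>
      refine ⟨?_, ?_, ih0 _, ih1 _⟩
      · intro hcon
        have := vars_reduce t0 _ i hcon
        rw [Function.update_self] at this
        exact absurd this (by simp)
      · intro hcon
        have := vars_reduce t1 _ i hcon
        rw [Function.update_self] at this
        exact absurd this (by simp)

lemma eval_reduce (t : DTree ι) (σ : ι → Option Bool) (x : ι → Bool)
    (hx : ∀ j b, σ j = some b → x j = b) :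
    (reduce t σ).eval x = t.eval x := by
  induction t generalizing σ with
  | leaf b => rfl
  | node i t0 t1 ih0 ih1 =>
    rw [reduce]
    match hσ : σ i with
    | some true =>
      have := hx i true hσ
      rw [DTree.eval, this, if_pos rfl]
      exact ih1 σ hx
    | some false =>
      have := hx i false hσ
      rw [DTree.eval, this]
      simp only [Bool.false_eq_true, if_false]
      exact ih0 σ hx
    | none =>
      rw [DTree.eval, DTree.eval]
      by_cases hxi : x i
      · rw [if_pos hxi, if_pos hxi]
        apply ih1
        intro j b hj
        by_cases hji : j = i
        · subst hji
          rw [Function.update_self] at hj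
          cases hj
          exact hxi
        · rw [Function.update_of_ne hji] at hj
          exact hx j b hj
      · rw [if_neg hxi, if_neg hxi]
        apply ih0
        intro j b hj
        by_cases hji : j = i
        · subst hji
          rw [Function.update_self] at hj
          cases hj
          exact Bool.not_eq_true _ ▸ (by simpa using hxi)
        · rw [Function.update_of_ne hji] at hj
          exact hx j b hj

/-! ### The path martingale -/

/-- The sum of signs of queried coordinates along the path of `x`. -/
noncomputable def Pt : DTree (Fin n) → (Fin n → Bool) → ℝ
  | .leaf _, _ => 0
  | .node i t0 t1, x => bsign (x i) + (if x i then Pt t1 x else Pt t0 x)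

noncomputable def evalR (t : DTree (Fin n)) (x : Fin n → Bool) : ℝ := bsign (t.eval x)

lemma eval_not_var {t : DTree (Fin n)} {j : Fin n} (hj : j ∉ vars t) (x : Fin n → Bool) :
    t.eval (fl j x) = t.eval x := by
  induction t with
  | leaf b => rfl
  | node i t0 t1 ih0 ih1 =>
    simp only [vars, Finset.mem_insert, Finset.mem_union] at hj
    push_neg at hj
    obtain ⟨hji, hj0, hj1⟩ := hj
    have hi : fl j x i = x i := by rw [fl, Function.update_of_ne (Ne.symm hji)]
    rw [DTree.eval, DTree.eval, hi, ih0 hj0, ih1 hj1]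

lemma Pt_not_var {t : DTree (Fin n)} {j : Fin n} (hj : j ∉ vars t) (x : Fin n → Bool) :
    Pt t (fl j x) = Pt t x := by
  induction t with
  | leaf b => rfl
  | node i t0 t1 ih0 ih1 =>
    simp only [vars, Finset.mem_insert, Finset.mem_union] at hj
    push_neg at hj
    obtain ⟨hji, hj0, hj1⟩ := hj
    have hi : fl j x i = x i := by rw [fl, Function.update_of_ne (Ne.symm hji)]
    rw [Pt, Pt, hi, ih0 hj0, ih1 hj1]

lemma half_true {i : Fin n} {u : (Fin n → Bool) → ℝ} (hu : ∀ x, u (fl i x) = u x) :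
    ∑ x, (if x i then u x else 0) = (1/2) * ∑ x, u x := by
  have key : ∑ x, (if x i then u x else 0) = ∑ x, (if x i then 0 else u x) := by
    rw [← sum_fl i (fun x => if x i then 0 else u x)]
    apply Finset.sum_congr rfl
    intro x _
    rw [fl_apply, hu]
    cases hx : x i <;> simp [hx]
  have tot : ∑ x, (if x i then u x else 0) + ∑ x, (if x i then 0 else u x) = ∑ x, u x := by
    rw [← Finset.sum_add_distrib]
    apply Finset.sum_congr rfl
    intro x _
    cases hx : x i <;> simp [hx]
  rw [key] at tot ⊢
  linarith

lemma half_false {i : Fin n} {u : (Fin n → Bool) → ℝ} (hu : ∀ x, u (fl i x) = u x) :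
    ∑ x, (if x i then 0 else u x) = (1/2) * ∑ x, u x := by
  have key : ∑ x, (if x i then u x else 0) = ∑ x, (if x i then 0 else u x) := by
    rw [← sum_fl i (fun x => if x i then 0 else u x)]
    apply Finset.sum_congr rfl
    intro x _
    rw [fl_apply, hu]
    cases hx : x i <;> simp [hx]
  rw [← key]
  exact half_true hu


lemma sum_branch {i : Fin n} {u v : (Fin n → Bool) → ℝ}
    (hu : ∀ x, u (fl i x) = u x) (hv : ∀ x, v (fl i x) = v x) :
    ∑ x, (if x i then u x else v x) = (1/2) * ∑ x, u x + (1/2) * ∑ x, v x := by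
  have step : ∀ x : Fin n → Bool, (if x i then u x else v x)
      = (if x i then u x else 0) + (if x i then 0 else v x) := by
    intro x; cases hx : x i <;> simp [hx]
  rw [Finset.sum_congr rfl fun x _ => step x, Finset.sum_add_distrib, half_true hu,
    half_false hv]

lemma sum_bsign_branch {i : Fin n} {u v : (Fin n → Bool) → ℝ}
    (hu : ∀ x, u (fl i x) = u x) (hv : ∀ x, v (fl i x) = v x) :
    ∑ x, bsign (x i) * (if x i then u x else v x)
      = (1/2) * ∑ x, u x - (1/2) * ∑ x, v x := by
  have step : ∀ x : Fin n → Bool, bsign (x i) * (if x i then u x else v x)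
      = (if x i then u x else 0) - (if x i then 0 else v x) := by
    intro x; cases hx : x i <;> simp [hx, bsign]
  rw [Finset.sum_congr rfl fun x _ => step x, Finset.sum_sub_distrib, half_true hu,
    half_false hv]

lemma bsign_sum_zero (i : Fin n) : ∑ x : Fin n → Bool, bsign (x i) = 0 := by
  apply sum_eq_zero_of_fl_neg (i := i)
  intro x
  rw [fl_apply, bsign_not]

lemma Pt_sum_zero {t : DTree (Fin n)} (ht : Reduced t) : ∑ x, Pt t x = 0 := by
  induction t with
  | leaf b => simp [Pt]
  | node i t0 t1 ih0 ih1 =>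
    obtain ⟨h0, h1, hr0, hr1⟩ := ht
    have expand : ∀ x : Fin n → Bool, Pt (.node i t0 t1) x
        = bsign (x i) + (if x i then Pt t1 x else Pt t0 x) := fun x => rfl
    rw [Finset.sum_congr rfl fun x _ => expand x, Finset.sum_add_distrib, bsign_sum_zero,
      sum_branch (fun x => Pt_not_var h1 x) (fun x => Pt_not_var h0 x), ih1 hr1, ih0 hr0]
    ring

lemma Pt_sq_bound {t : DTree (Fin n)} (ht : Reduced t) :
    ∑ x, (Pt t x) ^ 2 ≤ 2 ^ n * (t.depth : ℝ) := by
  induction t with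
  | leaf b => simp [Pt]
  | node i t0 t1 ih0 ih1 =>
    obtain ⟨h0, h1, hr0, hr1⟩ := ht
    have expand : ∀ x : Fin n → Bool, (Pt (.node i t0 t1) x) ^ 2
        = 1 + 2 * (bsign (x i) * (if x i then Pt t1 x else Pt t0 x))
          + (if x i then (Pt t1 x) ^ 2 else (Pt t0 x) ^ 2) := by
      intro x
      have e : Pt (.node i t0 t1) x
          = bsign (x i) + (if x i then Pt t1 x else Pt t0 x) := rfl
      rw [e]
      cases hx : x i <;> simp [hx, bsign] <;> ring
    rw [Finset.sum_congr rfl fun x _ => expand x, Finset.sum_add_distrib,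
      Finset.sum_add_distrib, sum_one_cube, ← Finset.mul_sum,
      sum_bsign_branch (fun x => Pt_not_var h1 x) (fun x => Pt_not_var h0 x),
      sum_branch (fun x => by rw [Pt_not_var h1])
        (fun x => by rw [Pt_not_var h0]),
      Pt_sum_zero hr1, Pt_sum_zero hr0]
    have b0 := ih0 hr0
    have b1 := ih1 hr1
    have hd : (DTree.depth (.node i t0 t1) : ℝ) = 1 + max (t0.depth : ℝ) (t1.depth : ℝ) := by
      rw [DTree.depth]
      push_cast
      rfl
    rw [hd]
    have hm0 : (t0.depth : ℝ) ≤ max (t0.depth : ℝ) (t1.depth : ℝ) := le_max_left _ _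
    have hm1 : (t1.depth : ℝ) ≤ max (t0.depth : ℝ) (t1.depth : ℝ) := le_max_right _ _
    have hp : (0:ℝ) < 2 ^ n := by positivity
    nlinarith

lemma eval_corr {t : DTree (Fin n)} (ht : Reduced t) (U : Finset (Fin n))
    (hU : vars t ⊆ U) :
    ∑ x, evalR t x * (∑ j ∈ U, bsign (x j)) = ∑ x, evalR t x * Pt t x := by
  induction t generalizing U with
  | leaf b =>
    have e : ∀ x : Fin n → Bool, evalR (.leaf b) x * Pt (.leaf b) x = 0 := by
      intro x
      rw [Pt]
      ring
    rw [Finset.sum_congr rfl fun x _ => e x, Finset.sum_const, smul_zero]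
    have e2 : ∑ x : Fin n → Bool, evalR (.leaf b) x * (∑ j ∈ U, bsign (x j))
        = ∑ j ∈ U, bsign b * ∑ x : Fin n → Bool, bsign (x j) := by
      calc ∑ x : Fin n → Bool, evalR (.leaf b) x * (∑ j ∈ U, bsign (x j))
          = ∑ x : Fin n → Bool, ∑ j ∈ U, bsign b * bsign (x j) := by
            apply Finset.sum_congr rfl
            intro x _
            rw [Finset.mul_sum]
            rfl
        _ = ∑ j ∈ U, ∑ x : Fin n → Bool, bsign b * bsign (x j) := Finset.sum_comm
        _ = ∑ j ∈ U, bsign b * ∑ x : Fin n → Bool, bsign (x j) := by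
            apply Finset.sum_congr rfl
            intro j _
            rw [Finset.mul_sum]
    rw [e2, Finset.sum_congr rfl fun j _ => by rw [bsign_sum_zero, mul_zero],
      Finset.sum_const, smul_zero]
  | node i t0 t1 ih0 ih1 =>
    obtain ⟨h0, h1, hr0, hr1⟩ := ht
    have hiU : i ∈ U := hU (by simp [vars])
    have hE : ∀ x : Fin n → Bool, evalR (.node i t0 t1) x
        = if x i then evalR t1 x else evalR t0 x := by
      intro x
      rw [evalR, DTree.eval]
      cases hx : x i <;> simp [hx, evalR]
    have hP : ∀ x : Fin n → Bool, Pt (.node i t0 t1) x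
        = bsign (x i) + (if x i then Pt t1 x else Pt t0 x) := fun _ => rfl
    have hL : ∀ x : Fin n → Bool, (∑ j ∈ U, bsign (x j))
        = bsign (x i) + ∑ j ∈ U.erase i, bsign (x j) := by
      intro x
      rw [← Finset.add_sum_erase U (fun j => bsign (x j)) hiU]
    -- invariance of the reduced linear part under flipping i
    have hLinv : ∀ x : Fin n → Bool, (∑ j ∈ U.erase i, bsign (fl i x j))
        = ∑ j ∈ U.erase i, bsign (x j) := by
      intro x
      apply Finset.sum_congr rfl
      intro j hj
      rw [fl, Function.update_of_ne (Finset.ne_of_mem_erase hj)]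
    have hsub1 : vars t1 ⊆ U.erase i := by
      intro j hj
      exact Finset.mem_erase.mpr ⟨by rintro rfl; exact h1 hj,
        hU (by simp [vars, Finset.mem_union, hj])⟩
    have hsub0 : vars t0 ⊆ U.erase i := by
      intro j hj
      exact Finset.mem_erase.mpr ⟨by rintro rfl; exact h0 hj,
        hU (by simp [vars, Finset.mem_union, hj])⟩
    -- expand LHS
    have lhs : ∑ x, evalR (.node i t0 t1) x * (∑ j ∈ U, bsign (x j))
        = ∑ x, evalR (.node i t0 t1) x * bsign (x i)
          + ((1/2) * ∑ x, evalR t1 x * (∑ j ∈ U.erase i, bsign (x j))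
            + (1/2) * ∑ x, evalR t0 x * (∑ j ∈ U.erase i, bsign (x j))) := by
      have step : ∀ x : Fin n → Bool,
          evalR (.node i t0 t1) x * (∑ j ∈ U, bsign (x j))
            = evalR (.node i t0 t1) x * bsign (x i)
              + (if x i then evalR t1 x * (∑ j ∈ U.erase i, bsign (x j))
                 else evalR t0 x * (∑ j ∈ U.erase i, bsign (x j))) := by
        intro x
        rw [hL x, hE x]
        cases hx : x i <;> simp [hx] <;> ring
      rw [Finset.sum_congr rfl fun x _ => step x, Finset.sum_add_distrib,
        sum_branch
          (fun x => by simp only [evalR]; rw [eval_not_var h1, hLinv])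
          (fun x => by simp only [evalR]; rw [eval_not_var h0, hLinv])]
    have rhs : ∑ x, evalR (.node i t0 t1) x * Pt (.node i t0 t1) x
        = ∑ x, evalR (.node i t0 t1) x * bsign (x i)
          + ((1/2) * ∑ x, evalR t1 x * Pt t1 x
            + (1/2) * ∑ x, evalR t0 x * Pt t0 x) := by
      have step : ∀ x : Fin n → Bool,
          evalR (.node i t0 t1) x * Pt (.node i t0 t1) x
            = evalR (.node i t0 t1) x * bsign (x i)
              + (if x i then evalR t1 x * Pt t1 x else evalR t0 x * Pt t0 x) := by
        intro x
        rw [hP x, hE x]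
        cases hx : x i <;> simp [hx] <;> ring
      rw [Finset.sum_congr rfl fun x _ => step x, Finset.sum_add_distrib,
        sum_branch
          (fun x => by simp only [evalR]; rw [eval_not_var h1, Pt_not_var h1])
          (fun x => by simp only [evalR]; rw [eval_not_var h0, Pt_not_var h0])]
    rw [lhs, rhs, ih1 hr1 _ hsub1, ih0 hr0 _ hsub0]

/-- O'Donnell–Servedio: level-1 Fourier weight of a depth-d tree is at most √d. -/
lemma os_bound {t : DTree (Fin n)} (ht : Reduced t) {d : ℕ} (hd : t.depth ≤ d) :
    ∑ i : Fin n, W (evalR t) {i} ≤ 2 ^ n * Real.sqrt d := by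
  have e1 : ∑ i : Fin n, W (evalR t) {i}
      = ∑ x, evalR t x * (∑ j ∈ Finset.univ, bsign (x j)) := by
    calc ∑ i : Fin n, W (evalR t) {i}
        = ∑ i : Fin n, ∑ x, evalR t x * bsign (x i) := by
          apply Finset.sum_congr rfl
          intro i _
          rw [W]
          apply Finset.sum_congr rfl
          intro x _
          rw [chi, Finset.prod_singleton]
      _ = ∑ x, ∑ i : Fin n, evalR t x * bsign (x i) := Finset.sum_comm
      _ = ∑ x, evalR t x * (∑ j ∈ Finset.univ, bsign (x j)) := by
          apply Finset.sum_congr rfl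
          intro x _
          rw [Finset.mul_sum]
  rw [e1, eval_corr ht Finset.univ (Finset.subset_univ _)]
  set A := ∑ x, evalR t x * Pt t x with hA
  have h1 : ∑ x : Fin n → Bool, (evalR t x) ^ 2 = 2 ^ n := by
    rw [Finset.sum_congr rfl fun x _ => by rw [pow_two, evalR, bsign_sq], sum_one_cube]
  have h2 : ∑ x, (Pt t x) ^ 2 ≤ 2 ^ n * (d : ℝ) := by
    refine le_trans (Pt_sq_bound ht) ?_
    have : (t.depth : ℝ) ≤ (d : ℝ) := Nat.cast_le.mpr hd
    have hp : (0:ℝ) ≤ 2 ^ n := by positivity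
    nlinarith
  have hsq : A ^ 2 ≤ ((2:ℝ) ^ n) ^ 2 * d := by
    have := Finset.sum_mul_sq_le_sq_mul_sq Finset.univ (fun x => evalR t x) (fun x => Pt t x)
    rw [h1] at this
    have hP2 : (0:ℝ) ≤ ∑ x, (Pt t x) ^ 2 :=
      Finset.sum_nonneg fun x _ => sq_nonneg _
    have hp : (0:ℝ) ≤ 2 ^ n := by positivity
    nlinarith
  calc A ≤ |A| := le_abs_self _
    _ = Real.sqrt (A ^ 2) := (Real.sqrt_sq_eq_abs A).symm
    _ ≤ Real.sqrt (((2:ℝ) ^ n) ^ 2 * d) := Real.sqrt_le_sqrt hsq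
    _ = 2 ^ n * Real.sqrt d := by
        rw [Real.sqrt_mul (by positivity), Real.sqrt_sq (by positivity)]


/-! ### Bonami hypercontractivity -/

lemma le_of_sq_le_sq' {x y : ℝ} (h : x ^ 2 ≤ y ^ 2) (hy : 0 ≤ y) : x ≤ y := by
  calc x ≤ |x| := le_abs_self _
    _ = Real.sqrt (x ^ 2) := (Real.sqrt_sq_eq_abs x).symm
    _ ≤ Real.sqrt (y ^ 2) := Real.sqrt_le_sqrt h
    _ = y := by rw [Real.sqrt_sq hy]

lemma sum_insert_reindex (i : Fin n) (g : Finset (Fin n) → ℝ) :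
    ∑ S ∈ (Finset.univ : Finset (Fin n)).powerset.filter (fun S => i ∈ S), g S
      = ∑ S ∈ (Finset.univ : Finset (Fin n)).powerset.filter (fun S => i ∉ S),
          g (insert i S) := by
  classical
  apply Finset.sum_nbij' (fun T => T.erase i) (fun S => insert i S)
  · intro T hT
    simp only [Finset.mem_filter, Finset.mem_powerset] at hT ⊢
    exact ⟨Finset.subset_univ _, Finset.notMem_erase i T⟩
  · intro S hS
    simp only [Finset.mem_filter, Finset.mem_powerset] at hS ⊢
    exact ⟨Finset.subset_univ _, Finset.mem_insert_self i S⟩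
  · intro T hT
    simp only [Finset.mem_filter] at hT
    exact Finset.insert_erase hT.2
  · intro S hS
    simp only [Finset.mem_filter] at hS
    exact Finset.erase_insert hS.2
  · intro T hT
    simp only [Finset.mem_filter] at hT
    rw [Finset.insert_erase hT.2]

/-- Sum function of a coefficient family. -/
noncomputable def hS (c : Finset (Fin n) → ℝ) (x : Fin n → Bool) : ℝ :=
  ∑ S ∈ (Finset.univ : Finset (Fin n)).powerset, c S * chi S x

lemma hS_invariant {c : Finset (Fin n) → ℝ} {i : Fin n}
    (hc : ∀ S, c S ≠ 0 → i ∉ S) (x : Fin n → Bool) : hS c (fl i x) = hS c x := by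
  rw [hS, hS]
  apply Finset.sum_congr rfl
  intro S _
  by_cases h : c S = 0
  · rw [h, zero_mul, zero_mul]
  · rw [chi_fl_not_mem (hc S h)]

/-- Decomposition along coordinate `i`. -/
lemma hS_decomp (c : Finset (Fin n) → ℝ) (i : Fin n) (x : Fin n → Bool) :
    hS c x = hS (fun S => if i ∈ S then 0 else c S) x
      + bsign (x i) * hS (fun S => if i ∈ S then 0 else c (insert i S)) x := by
  classical
  rw [hS, ← Finset.sum_filter_add_sum_filter_not _ (fun S => i ∈ S)]
  have e1 : ∑ S ∈ (Finset.univ : Finset (Fin n)).powerset.filter (fun S => i ∉ S),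
      c S * chi S x = hS (fun S => if i ∈ S then 0 else c S) x := by
    rw [hS, Finset.sum_filter]
    apply Finset.sum_congr rfl
    intro S _
    by_cases h : i ∈ S <;> simp [h]
  have e2 : ∑ S ∈ (Finset.univ : Finset (Fin n)).powerset.filter (fun S => i ∈ S),
      c S * chi S x
        = bsign (x i) * hS (fun S => if i ∈ S then 0 else c (insert i S)) x := by
    rw [sum_insert_reindex i (fun S => c S * chi S x)]
    have step1 : ∀ S ∈ (Finset.univ : Finset (Fin n)).powerset.filter (fun S => i ∉ S),
        c (insert i S) * chi (insert i S) x
          = bsign (x i) * ((if i ∈ S then 0 else c (insert i S)) * chi S x) := by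
      intro S hSm
      simp only [Finset.mem_filter] at hSm
      rw [chi_insert hSm.2, if_neg hSm.2]
      ring
    rw [Finset.sum_congr rfl step1, ← Finset.mul_sum]
    congr 1
    rw [hS, Finset.sum_filter]
    apply Finset.sum_congr rfl
    intro S _
    by_cases h : i ∈ S <;> simp [h]
  rw [e1, e2]
  ring

set_option maxHeartbeats 1000000 in
lemma bonami (A : Finset (Fin n)) : ∀ (m : ℕ) (c : Finset (Fin n) → ℝ),
    (∀ S, c S ≠ 0 → S ⊆ A ∧ S.card ≤ m) →
    2 ^ n * (∑ x, (hS c x) ^ 4) ≤ 9 ^ m * (∑ x, (hS c x) ^ 2) ^ 2 := by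
  classical
  induction A using Finset.induction_on with
  | empty =>
    intro m c hc
    have hconst : ∀ x : Fin n → Bool, hS c x = c ∅ := by
      intro x
      rw [hS]
      rw [Finset.sum_eq_single ∅]
      · simp [chi]
      · intro S _ hSne
        have : c S = 0 := by
          by_contra hne
          exact hSne (Finset.subset_empty.mp (hc S hne).1)
        rw [this, zero_mul]
      · intro habs
        exact absurd (Finset.mem_powerset.mpr (Finset.empty_subset _)) habs
    have hsum4 : ∑ x : Fin n → Bool, (hS c x) ^ 4 = 2 ^ n * (c ∅) ^ 4 := by
      calc ∑ x : Fin n → Bool, (hS c x) ^ 4 = ∑ _x : Fin n → Bool, (c ∅) ^ 4 :=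
            Finset.sum_congr rfl fun x _ => by rw [hconst x]
        _ = 2 ^ n * (c ∅) ^ 4 := by
            rw [Finset.sum_const, Finset.card_univ, nsmul_eq_mul, card_cube]
    have hsum2 : ∑ x : Fin n → Bool, (hS c x) ^ 2 = 2 ^ n * (c ∅) ^ 2 := by
      calc ∑ x : Fin n → Bool, (hS c x) ^ 2 = ∑ _x : Fin n → Bool, (c ∅) ^ 2 :=
            Finset.sum_congr rfl fun x _ => by rw [hconst x]
        _ = 2 ^ n * (c ∅) ^ 2 := by
            rw [Finset.sum_const, Finset.card_univ, nsmul_eq_mul, card_cube]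
    rw [hsum4, hsum2]
    have h9 : (1:ℝ) ≤ 9 ^ m := one_le_pow₀ (by norm_num : (1:ℝ) ≤ 9)
    have hp : (0:ℝ) ≤ 2 ^ n := by positivity
    nlinarith [sq_nonneg (c ∅), sq_nonneg ((c ∅)^2), mul_nonneg hp (sq_nonneg (c ∅)),
      sq_nonneg (2^n * (c ∅)^2)]
  | @insert i A' hiA ih =>
    intro m c hc
    by_cases hm : m = 0
    · subst hm
      apply ih 0 c
      intro S hS0
      obtain ⟨hsub, hcard⟩ := hc S hS0
      have : S = ∅ := Finset.card_eq_zero.mp (Nat.le_zero.mp hcard)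
      subst this
      exact ⟨Finset.empty_subset _, le_rfl⟩
    obtain ⟨m', rfl⟩ := Nat.exists_eq_succ_of_ne_zero hm
    set c0 : Finset (Fin n) → ℝ := fun S => if i ∈ S then 0 else c S with hc0def
    set c1 : Finset (Fin n) → ℝ := fun S => if i ∈ S then 0 else c (insert i S) with hc1def
    have hsupp0 : ∀ S, c0 S ≠ 0 → S ⊆ A' ∧ S.card ≤ m' + 1 := by
      intro S h
      rw [hc0def] at h
      simp only at h
      by_cases hiS : i ∈ S
      · rw [if_pos hiS] at h; exact absurd rfl h
      · rw [if_neg hiS] at h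
        obtain ⟨hsub, hcard⟩ := hc S h
        refine ⟨fun j hj => ?_, hcard⟩
        rcases Finset.mem_insert.mp (hsub hj) with rfl | hj'
        · exact absurd hj hiS
        · exact hj'
    have hsupp1 : ∀ S, c1 S ≠ 0 → S ⊆ A' ∧ S.card ≤ m' := by
      intro S h
      rw [hc1def] at h
      simp only at h
      by_cases hiS : i ∈ S
      · rw [if_pos hiS] at h; exact absurd rfl h
      · rw [if_neg hiS] at h
        obtain ⟨hsub, hcard⟩ := hc _ h
        constructor
        · intro j hj
          have hji : j ≠ i := by rintro rfl; exact hiS hj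
          rcases Finset.mem_insert.mp (hsub (Finset.mem_insert_of_mem hj)) with h' | h'
          · exact absurd h' hji
          · exact h'
        · rw [Finset.card_insert_of_notMem hiS] at hcard
          omega
    have hinv0 : ∀ x, hS c0 (fl i x) = hS c0 x := by
      intro x
      apply hS_invariant
      intro S h
      rw [hc0def] at h
      simp only at h
      by_cases hiS : i ∈ S
      · rw [if_pos hiS] at h; exact absurd rfl h
      · exact hiS
    have hinv1 : ∀ x, hS c1 (fl i x) = hS c1 x := by
      intro x
      apply hS_invariant
      intro S h
      rw [hc1def] at h
      simp only at h
      by_cases hiS : i ∈ S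
      · rw [if_pos hiS] at h; exact absurd rfl h
      · exact hiS
    have hdec : ∀ x : Fin n → Bool, hS c x = hS c0 x + bsign (x i) * hS c1 x :=
      fun x => hS_decomp c i x
    -- expand fourth and second powers
    have e4 : ∀ x : Fin n → Bool, (hS c x) ^ 4
        = ((hS c0 x) ^ 4 + 6 * (hS c0 x) ^ 2 * (hS c1 x) ^ 2 + (hS c1 x) ^ 4)
          + bsign (x i) * (4 * (hS c0 x) ^ 3 * hS c1 x + 4 * hS c0 x * (hS c1 x) ^ 3) := by
      intro x
      rw [hdec x]
      cases hx : x i <;> simp [bsign] <;> ring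
    have e2 : ∀ x : Fin n → Bool, (hS c x) ^ 2
        = ((hS c0 x) ^ 2 + (hS c1 x) ^ 2)
          + bsign (x i) * (2 * hS c0 x * hS c1 x) := by
      intro x
      rw [hdec x]
      cases hx : x i <;> simp [bsign] <;> ring
    have cross4 : ∑ x, bsign (x i) *
        (4 * (hS c0 x) ^ 3 * hS c1 x + 4 * hS c0 x * (hS c1 x) ^ 3) = 0 := by
      apply sum_eq_zero_of_fl_neg (i := i)
      intro x
      rw [fl_apply, bsign_not, hinv0, hinv1]
      ring
    have cross2 : ∑ x, bsign (x i) * (2 * hS c0 x * hS c1 x) = 0 := by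
      apply sum_eq_zero_of_fl_neg (i := i)
      intro x
      rw [fl_apply, bsign_not, hinv0, hinv1]
      ring
    have sum4 : ∑ x, (hS c x) ^ 4
        = ∑ x, (hS c0 x) ^ 4 + 6 * ∑ x, (hS c0 x) ^ 2 * (hS c1 x) ^ 2
          + ∑ x, (hS c1 x) ^ 4 := by
      rw [Finset.sum_congr rfl fun x _ => e4 x, Finset.sum_add_distrib, cross4, add_zero,
        Finset.sum_add_distrib, Finset.sum_add_distrib, Finset.mul_sum]
      ring
    have sum2 : ∑ x, (hS c x) ^ 2 = ∑ x, (hS c0 x) ^ 2 + ∑ x, (hS c1 x) ^ 2 := by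
      rw [Finset.sum_congr rfl fun x _ => e2 x, Finset.sum_add_distrib, cross2, add_zero,
        Finset.sum_add_distrib]
    set A2 := ∑ x, (hS c0 x) ^ 2 with hA2
    set B2 := ∑ x, (hS c1 x) ^ 2 with hB2
    set A4 := ∑ x, (hS c0 x) ^ 4 with hA4
    set B4 := ∑ x, (hS c1 x) ^ 4 with hB4
    set M := ∑ x, (hS c0 x) ^ 2 * (hS c1 x) ^ 2 with hM
    have ihA : 2 ^ n * A4 ≤ 9 ^ (m' + 1) * A2 ^ 2 := ih (m' + 1) c0 hsupp0
    have ihB : 2 ^ n * B4 ≤ 9 ^ m' * B2 ^ 2 := ih m' c1 hsupp1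
    have hA2n : 0 ≤ A2 := Finset.sum_nonneg fun x _ => sq_nonneg _
    have hB2n : 0 ≤ B2 := Finset.sum_nonneg fun x _ => sq_nonneg _
    have hA4n : 0 ≤ A4 := Finset.sum_nonneg fun x _ => by positivity
    have hB4n : 0 ≤ B4 := Finset.sum_nonneg fun x _ => by positivity
    have hMn : 0 ≤ M := Finset.sum_nonneg fun x _ => by positivity
    have hp : (0:ℝ) < 2 ^ n := by positivity
    have hCS : M ^ 2 ≤ A4 * B4 := by
      have := Finset.sum_mul_sq_le_sq_mul_sq Finset.univ
        (fun x => (hS c0 x) ^ 2) (fun x => (hS c1 x) ^ 2)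
      calc M ^ 2 ≤ (∑ x, ((hS c0 x) ^ 2) ^ 2) * ∑ x, ((hS c1 x) ^ 2) ^ 2 := this
        _ = A4 * B4 := by
            rw [hA4, hB4]
            congr 1 <;> · apply Finset.sum_congr rfl; intro x _; ring
    -- bound the middle term
    have hmid : 2 ^ n * M ≤ 3 ^ (2 * m' + 1) * (A2 * B2) := by
      apply le_of_sq_le_sq'
      · have e9 : (9:ℝ) ^ (m' + 1) * 9 ^ m' = (3 ^ (2 * m' + 1)) ^ 2 := by
          rw [← pow_add]
          have h3 : (9:ℝ) = 3 ^ 2 := by norm_num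
          rw [h3, ← pow_mul, ← pow_mul]
          ring_nf
        calc (2 ^ n * M) ^ 2 = (2^n * 2^n) * M ^ 2 := by ring
          _ ≤ (2^n * 2^n) * (A4 * B4) := mul_le_mul_of_nonneg_left hCS (by positivity)
          _ = (2 ^ n * A4) * (2 ^ n * B4) := by ring
          _ ≤ (9 ^ (m' + 1) * A2 ^ 2) * (9 ^ m' * B2 ^ 2) := by
              apply mul_le_mul ihA ihB (by positivity) (by positivity)
          _ = (9 ^ (m' + 1) * 9 ^ m') * (A2 ^ 2 * B2 ^ 2) := by ring
          _ = (3 ^ (2 * m' + 1) * (A2 * B2)) ^ 2 := by rw [e9]; ring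
      · positivity
    have h69 : 6 * (3:ℝ) ^ (2 * m' + 1) = 2 * 9 ^ (m' + 1) := by
      have : (9:ℝ) = 3 ^ 2 := by norm_num
      rw [this, ← pow_mul]
      have : 2 * (m' + 1) = (2 * m' + 1) + 1 := by ring
      rw [this, pow_succ]
      ring
    have h9mono : (9:ℝ) ^ m' ≤ 9 ^ (m' + 1) := by
      apply pow_le_pow_right₀ (by norm_num)
      omega
    rw [Nat.succ_eq_add_one, sum4, sum2]
    have goal1 : 2^n * (A4 + 6 * M + B4)
        ≤ 9^(m'+1) * A2^2 + 6 * (3 ^ (2*m'+1) * (A2 * B2)) + 9^m' * B2^2 := by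
      nlinarith
    calc 2^n * (A4 + 6 * M + B4)
        ≤ 9^(m'+1) * A2^2 + 6 * (3 ^ (2*m'+1) * (A2 * B2)) + 9^m' * B2^2 := goal1
      _ ≤ 9^(m'+1) * A2^2 + 2 * 9^(m'+1) * (A2 * B2) + 9^(m'+1) * B2^2 := by
          have : 6 * (3 ^ (2*m'+1) * (A2 * B2)) = 2 * 9^(m'+1) * (A2*B2) := by
            rw [← mul_assoc, h69]
          rw [this]
          have : 9^m' * B2^2 ≤ 9^(m'+1) * B2^2 := by nlinarith [sq_nonneg B2]
          linarith
      _ = 9^(m'+1) * (A2 + B2)^2 := by ring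

/-! ### Low-degree influence bound -/

lemma W_hS (c : Finset (Fin n) → ℝ) (S : Finset (Fin n)) :
    W (hS c) S = 2 ^ n * c S := by
  classical
  calc W (hS c) S
      = ∑ x, ∑ T ∈ (Finset.univ : Finset (Fin n)).powerset, c T * (chi T x * chi S x) := by
        rw [W]
        apply Finset.sum_congr rfl
        intro x _
        rw [hS, Finset.sum_mul]
        apply Finset.sum_congr rfl
        intro T _
        ring
    _ = ∑ T ∈ (Finset.univ : Finset (Fin n)).powerset, c T * ∑ x, chi T x * chi S x := by
        rw [Finset.sum_comm]
        exact Finset.sum_congr rfl fun T _ => (Finset.mul_sum _ _ _).symm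
    _ = ∑ T ∈ (Finset.univ : Finset (Fin n)).powerset,
          (if T = S then 2 ^ n * c T else 0) := by
        apply Finset.sum_congr rfl
        intro T _
        rw [chi_orth]
        by_cases h : T = S <;> simp [h, mul_comm]
    _ = 2 ^ n * c S := by
        rw [Finset.sum_ite_eq' _ S (fun T => (2:ℝ) ^ n * c T)]
        simp

lemma sum_sq_W (h : (Fin n → Bool) → ℝ) :
    ∑ S ∈ (Finset.univ : Finset (Fin n)).powerset, (W h S) ^ 2 = 2 ^ n * ∑ x, (h x) ^ 2 := by
  have := plancherel h h
  calc ∑ S ∈ (Finset.univ : Finset (Fin n)).powerset, (W h S) ^ 2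
      = ∑ S ∈ (Finset.univ : Finset (Fin n)).powerset, W h S * W h S :=
        Finset.sum_congr rfl fun S _ => pow_two _
    _ = 2 ^ n * ∑ x, h x * h x := this
    _ = 2 ^ n * ∑ x, (h x) ^ 2 := by
        rw [Finset.sum_congr rfl fun (x : Fin n → Bool) _ => (pow_two (h x)).symm]

set_option maxHeartbeats 1600000 in
/-- Hypercontractive bound on the low-degree Fourier weight of a {-1,0,1}-valued function. -/
lemma hyper (g : (Fin n → Bool) → ℝ) (hg : ∀ x, g x = 0 ∨ g x = 1 ∨ g x = -1) (k : ℕ) :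
    (∑ S ∈ (Finset.univ : Finset (Fin n)).powerset.filter (fun S => S.card ≤ k),
        (W g S) ^ 2) ^ 2
      ≤ 9 ^ k * 2 ^ n * (∑ x, (g x) ^ 2) ^ 3 := by
  classical
  set T := ∑ S ∈ (Finset.univ : Finset (Fin n)).powerset.filter (fun S => S.card ≤ k),
      (W g S) ^ 2 with hT
  set cq : Finset (Fin n) → ℝ := fun S => if S.card ≤ k then W g S / 2 ^ n else 0 with hcq
  set q : (Fin n → Bool) → ℝ := hS cq with hq
  have hp : (0:ℝ) < 2 ^ n := by positivity
  have hTnn : 0 ≤ T :=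
    Finset.sum_nonneg fun S _ => sq_nonneg _
  have hWq : ∀ S, W q S = if S.card ≤ k then W g S else 0 := by
    intro S
    rw [hq, W_hS, hcq]
    by_cases h : S.card ≤ k <;> simp [h]
    field_simp
  -- ∑ q² = T / 2^n
  have hq2 : ∑ x, (q x) ^ 2 = T / 2 ^ n := by
    have e := sum_sq_W q
    have e2 : ∑ S ∈ (Finset.univ : Finset (Fin n)).powerset, (W q S) ^ 2 = T := by
      rw [hT, Finset.sum_filter]
      apply Finset.sum_congr rfl
      intro S _
      rw [hWq S]
      by_cases h : S.card ≤ k <;> simp [h]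
    rw [e2] at e
    field_simp [e.symm]
    linarith [e]
  -- ∑ g·q = T / 2^n
  have hgq : ∑ x, g x * q x = T / 2 ^ n := by
    have e := plancherel g q
    have e2 : ∑ S ∈ (Finset.univ : Finset (Fin n)).powerset, W g S * W q S = T := by
      rw [hT, Finset.sum_filter]
      apply Finset.sum_congr rfl
      intro S _
      rw [hWq S]
      by_cases h : S.card ≤ k <;> simp [h, pow_two]
    rw [e2] at e
    rw [eq_div_iff (ne_of_gt hp), mul_comm]
    exact e.symm
  -- Bonami for q (degree ≤ k)
  have hbon : 2 ^ n * (∑ x, (q x) ^ 4) ≤ 9 ^ k * (∑ x, (q x) ^ 2) ^ 2 := by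
    apply bonami Finset.univ k cq
    intro S hne
    rw [hcq] at hne
    simp only at hne
    by_cases h : S.card ≤ k
    · exact ⟨Finset.subset_univ _, h⟩
    · rw [if_neg h] at hne
      exact absurd rfl hne
  set E2 := ∑ x, (g x) ^ 2 with hE2
  set Q4 := ∑ x, (q x) ^ 4 with hQ4
  set U := ∑ x, (g x) ^ 2 * (q x) ^ 2 with hU
  have hE2nn : 0 ≤ E2 := Finset.sum_nonneg fun x _ => sq_nonneg _
  have hQ4nn : 0 ≤ Q4 := Finset.sum_nonneg fun x _ => by positivity
  have hUnn : 0 ≤ U := Finset.sum_nonneg fun x _ => by positivity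
  -- g x * q x ≤ g x ^ 2 * |q x| and first Cauchy–Schwarz
  have step1 : T / 2 ^ n ≤ ∑ x, (g x) ^ 2 * |q x| := by
    rw [← hgq]
    apply Finset.sum_le_sum
    intro x _
    rcases hg x with h | h | h
    · rw [h]; simp
    · rw [h]; simpa using le_abs_self (q x)
    · rw [h]; simpa using neg_le_abs (q x)
  have cs1 : (∑ x, (g x) ^ 2 * |q x|) ^ 2 ≤ E2 * U := by
    have := Finset.sum_mul_sq_le_sq_mul_sq Finset.univ
      (fun x => g x) (fun x => g x * |q x|)
    calc (∑ x, (g x) ^ 2 * |q x|) ^ 2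
        = (∑ x, g x * (g x * |q x|)) ^ 2 := by
          congr 1
          apply Finset.sum_congr rfl
          intro x _
          ring
      _ ≤ (∑ x, (g x) ^ 2) * ∑ x, (g x * |q x|) ^ 2 := this
      _ = E2 * U := by
          congr 1
          apply Finset.sum_congr rfl
          intro x _
          rw [mul_pow, sq_abs]
  have g2le1 : ∀ x, (g x) ^ 2 ≤ 1 := by
    intro x
    rcases hg x with h | h | h <;> rw [h] <;> norm_num
  have g4eq : ∀ x, ((g x) ^ 2) ^ 2 = (g x) ^ 2 := by
    intro x
    rcases hg x with h | h | h <;> rw [h] <;> norm_num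
  have cs2 : U ^ 2 ≤ E2 * Q4 := by
    have := Finset.sum_mul_sq_le_sq_mul_sq Finset.univ
      (fun x => g x ^ 2) (fun x => q x ^ 2)
    calc U ^ 2 ≤ (∑ x, ((g x) ^ 2) ^ 2) * ∑ x, ((q x) ^ 2) ^ 2 := this
      _ = E2 * ∑ x, (q x) ^ 4 := by
          congr 1
          · exact Finset.sum_congr rfl fun x _ => g4eq x
          · exact Finset.sum_congr rfl fun x _ => by ring
      _ = E2 * Q4 := rfl
  -- combine
  have key : (T / 2 ^ n) ^ 2 ≤ E2 * U := by
    have h0 : 0 ≤ T / 2 ^ n := by positivity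
    exact le_trans (pow_le_pow_left₀ h0 step1 2) cs1
  have hQ4b : Q4 ≤ 9 ^ k * (T / 2 ^ n) ^ 2 / 2 ^ n := by
    rw [hq2] at hbon
    rw [le_div_iff₀ hp]
    linarith
  -- T⁴/16ⁿ ≤ E2² U² ≤ E2³ Q4 ≤ E2³ 9^k T²/8ⁿ
  have final : (T / 2 ^ n) ^ 4 ≤ E2 ^ 3 * (9 ^ k * (T / 2 ^ n) ^ 2 / 2 ^ n) := by
    calc (T / 2 ^ n) ^ 4 = ((T / 2 ^ n) ^ 2) ^ 2 := by ring
      _ ≤ (E2 * U) ^ 2 := by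
          apply pow_le_pow_left₀ (sq_nonneg _) key
      _ = E2 ^ 2 * U ^ 2 := by ring
      _ ≤ E2 ^ 2 * (E2 * Q4) := by nlinarith
      _ = E2 ^ 3 * Q4 := by ring
      _ ≤ E2 ^ 3 * (9 ^ k * (T / 2 ^ n) ^ 2 / 2 ^ n) := by
          apply mul_le_mul_of_nonneg_left hQ4b (by positivity)
  -- conclude T² ≤ 9^k 2^n E2³
  by_cases hT0 : T = 0
  · have hnn : (0:ℝ) ≤ 9 ^ k * 2 ^ n * E2 ^ 3 := by positivity
    simpa [hT0] using hnn
  · have hTpos : 0 < T := lt_of_le_of_ne hTnn (Ne.symm hT0)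
    have h16 : (0:ℝ) < (2:ℝ) ^ n * (2^n) * (2^n) * (2^n) := by positivity
    rw [div_pow, div_pow] at final
    have expand : T ^ 4 / ((2^n) ^ 4 : ℝ) ≤ E2 ^ 3 * (9 ^ k * (T ^ 2 / (2 ^ n) ^ 2) / 2 ^ n) := final
    have : T ^ 4 * 2 ^ n ≤ 9 ^ k * E2 ^ 3 * T ^ 2 * 2 ^ n * 2 ^ n := by
      have hh := mul_le_mul_of_nonneg_left expand (le_of_lt (by positivity : (0:ℝ) < (2^n)^4))
      calc T ^ 4 * 2 ^ n = (2^n)^4 * (T ^ 4 / (2^n)^4) * 2 ^ n := by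
            field_simp
          _ ≤ (2^n)^4 * (E2 ^ 3 * (9 ^ k * (T ^ 2 / (2 ^ n) ^ 2) / 2 ^ n)) * 2 ^ n := by
            apply mul_le_mul_of_nonneg_right _ (le_of_lt hp)
            exact mul_le_mul_of_nonneg_left expand (by positivity)
          _ = 9 ^ k * E2 ^ 3 * T ^ 2 * 2 ^ n * 2 ^ n := by
            field_simp
    have hT2 : 0 < T ^ 2 * 2 ^ n := by positivity
    nlinarith [this, hTpos, hp]

/-! ### Monotone functions -/

lemma Dv_vals {h : (Fin n → Bool) → ℝ} (hb : ∀ x, h x = 1 ∨ h x = -1) (i : Fin n)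
    (x : Fin n → Bool) : Dv i h x = 0 ∨ Dv i h x = 1 ∨ Dv i h x = -1 := by
  rw [Dv]
  rcases hb (Function.update x i true) with h1 | h1 <;>
    rcases hb (Function.update x i false) with h2 | h2 <;> rw [h1, h2] <;> norm_num

lemma mono_Dv {f : (Fin n → Bool) → Bool} (hf : Monotone f) (i : Fin n) (x : Fin n → Bool) :
    Dv i (fun y => bsign (f y)) x = 0 ∨ Dv i (fun y => bsign (f y)) x = 1 := by
  have hle : Function.update x i false ≤ Function.update x i true := by
    intro j
    by_cases hji : j = i
    · subst hji
      rw [Function.update_self, Function.update_self]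
      exact Bool.false_le _
    · rw [Function.update_of_ne hji, Function.update_of_ne hji]
  have hmono := hf hle
  rw [Dv]
  cases hft : f (Function.update x i true) <;> cases hff : f (Function.update x i false)
  · left; norm_num [bsign]
  · rw [hft, hff] at hmono
    exact absurd hmono (by simp)
  · right; norm_num [bsign]
  · left; norm_num [bsign]

lemma mono_inf {f : (Fin n → Bool) → Bool} (hf : Monotone f) (i : Fin n) :
    ∑ x, (Dv i (fun y => bsign (f y)) x) ^ 2 = W (fun y => bsign (f y)) {i} := by
  set h : (Fin n → Bool) → ℝ := fun y => bsign (f y) with hh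
  have e1 : W h {i} = ∑ x, Dv i h x := by
    rw [W]
    have e0 : ∀ x : Fin n → Bool, h x * chi {i} x = h x * bsign (x i) * 1 := by
      intro x
      rw [chi, Finset.prod_singleton]
      ring
    rw [Finset.sum_congr rfl fun x _ => e0 x,
      sum_bsign_eq_sum_Dv i h (fun _ => 1) (fun _ => rfl)]
    simp
  rw [e1]
  apply Finset.sum_congr rfl
  intro x _
  rcases mono_Dv hf i x with h0 | h0 <;> rw [h0] <;> norm_num

/-! ### Tail bounds -/

lemma coord_tail (h : (Fin n → Bool) → ℝ) (hb : ∀ x, h x = 1 ∨ h x = -1) (i : Fin n) (k : ℕ) :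
    (∑ S ∈ (Finset.univ : Finset (Fin n)).powerset.filter
        (fun S => i ∈ S ∧ S.card ≤ k), (W h S) ^ 2) ^ 2
      ≤ 9 ^ k * 2 ^ n * (∑ x, (Dv i h x) ^ 2) ^ 3 := by
  classical
  set g := Dv i h with hg
  have reindex : ∑ S ∈ (Finset.univ : Finset (Fin n)).powerset.filter
      (fun S => i ∈ S ∧ S.card ≤ k), (W h S) ^ 2
        = ∑ S ∈ (Finset.univ : Finset (Fin n)).powerset.filter
            (fun S => i ∉ S ∧ S.card + 1 ≤ k), (W g S) ^ 2 := by
    apply Finset.sum_nbij' (fun T => T.erase i) (fun S => insert i S)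
    · intro T hT
      simp only [Finset.mem_filter, Finset.mem_powerset] at hT ⊢
      refine ⟨Finset.subset_univ _, Finset.notMem_erase i T, ?_⟩
      rw [Finset.card_erase_of_mem hT.2.1]
      have hc1 : 1 ≤ T.card := Finset.card_pos.mpr ⟨i, hT.2.1⟩
      omega
    · intro S hS
      simp only [Finset.mem_filter, Finset.mem_powerset] at hS ⊢
      refine ⟨Finset.subset_univ _, Finset.mem_insert_self i S, ?_⟩
      rw [Finset.card_insert_of_notMem hS.2.1]
      exact hS.2.2
    · intro T hT
      simp only [Finset.mem_filter] at hT
      exact Finset.insert_erase hT.2.1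
    · intro S hS
      simp only [Finset.mem_filter] at hS
      exact Finset.erase_insert hS.2.1
    · intro T hT
      simp only [Finset.mem_filter] at hT
      rw [hg, W_Dv]
      rw [if_neg (Finset.notMem_erase i T), Finset.insert_erase hT.2.1]
  have mono1 : ∑ S ∈ (Finset.univ : Finset (Fin n)).powerset.filter
      (fun S => i ∉ S ∧ S.card + 1 ≤ k), (W g S) ^ 2
        ≤ ∑ S ∈ (Finset.univ : Finset (Fin n)).powerset.filter
            (fun S => S.card ≤ k), (W g S) ^ 2 := by
    apply Finset.sum_le_sum_of_subset_of_nonneg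
    · intro S hS
      simp only [Finset.mem_filter, Finset.mem_powerset] at hS ⊢
      exact ⟨hS.1, by omega⟩
    · intro S _ _
      exact sq_nonneg _
  have hnn : 0 ≤ ∑ S ∈ (Finset.univ : Finset (Fin n)).powerset.filter
      (fun S => i ∈ S ∧ S.card ≤ k), (W h S) ^ 2 :=
    Finset.sum_nonneg fun S _ => sq_nonneg _
  calc (∑ S ∈ (Finset.univ : Finset (Fin n)).powerset.filter
      (fun S => i ∈ S ∧ S.card ≤ k), (W h S) ^ 2) ^ 2
      ≤ (∑ S ∈ (Finset.univ : Finset (Fin n)).powerset.filter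
          (fun S => S.card ≤ k), (W g S) ^ 2) ^ 2 := by
        apply pow_le_pow_left₀ hnn
        rw [reindex]
        exact mono1
    _ ≤ 9 ^ k * 2 ^ n * (∑ x, (g x) ^ 2) ^ 3 := hyper g (Dv_vals hb i) k

lemma tail_low (h : (Fin n → Bool) → ℝ) (J : Finset (Fin n)) (k : ℕ) :
    ∑ S ∈ (Finset.univ : Finset (Fin n)).powerset.filter
        (fun S => ¬ S ⊆ J ∧ S.card ≤ k), (W h S) ^ 2
      ≤ ∑ i ∈ Jᶜ, ∑ S ∈ (Finset.univ : Finset (Fin n)).powerset.filter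
          (fun S => i ∈ S ∧ S.card ≤ k), (W h S) ^ 2 := by
  classical
  have rhs_eq : ∑ i ∈ Jᶜ, ∑ S ∈ (Finset.univ : Finset (Fin n)).powerset.filter
      (fun S => i ∈ S ∧ S.card ≤ k), (W h S) ^ 2
        = ∑ S ∈ (Finset.univ : Finset (Fin n)).powerset,
            ∑ i ∈ Jᶜ, (if i ∈ S ∧ S.card ≤ k then (W h S) ^ 2 else 0) := by
    rw [Finset.sum_comm]
    apply Finset.sum_congr rfl
    intro i _
    rw [Finset.sum_filter]
  rw [rhs_eq, Finset.sum_filter]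
  apply Finset.sum_le_sum
  intro S _
  by_cases hcond : ¬ S ⊆ J ∧ S.card ≤ k
  · rw [if_pos hcond]
    obtain ⟨i0, hi0S, hi0J⟩ := Finset.not_subset.mp hcond.1
    have hi0c : i0 ∈ Jᶜ := Finset.mem_compl.mpr hi0J
    calc (W h S) ^ 2
        = (fun i => if i ∈ S ∧ S.card ≤ k then (W h S) ^ 2 else 0) i0 := by
          simp [hi0S, hcond.2]
      _ ≤ ∑ i ∈ Jᶜ, (if i ∈ S ∧ S.card ≤ k then (W h S) ^ 2 else 0) :=
          Finset.single_le_sum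
            (f := fun i => if i ∈ S ∧ S.card ≤ k then (W h S) ^ 2 else 0)
            (fun i _ => by by_cases hi : i ∈ S ∧ S.card ≤ k <;> simp [hi, sq_nonneg]) hi0c
  · rw [if_neg hcond]
    apply Finset.sum_nonneg
    intro i _
    by_cases hi : i ∈ S ∧ S.card ≤ k <;> simp [hi, sq_nonneg]

lemma tail_high (h : (Fin n → Bool) → ℝ) (k : ℕ) :
    (k : ℝ) * ∑ S ∈ (Finset.univ : Finset (Fin n)).powerset.filter
        (fun S => ¬ S.card ≤ k), (W h S) ^ 2
      ≤ ∑ S ∈ (Finset.univ : Finset (Fin n)).powerset, (S.card : ℝ) * (W h S) ^ 2 := by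
  classical
  rw [Finset.mul_sum]
  have step1 : ∀ S ∈ (Finset.univ : Finset (Fin n)).powerset.filter
      (fun S => ¬ S.card ≤ k), (k : ℝ) * (W h S) ^ 2 ≤ (S.card : ℝ) * (W h S) ^ 2 := by
    intro S hS
    simp only [Finset.mem_filter] at hS
    have : (k : ℝ) ≤ (S.card : ℝ) := by
      exact_mod_cast le_of_lt (lt_of_not_ge hS.2)
    exact mul_le_mul_of_nonneg_right this (sq_nonneg _)
  refine le_trans (Finset.sum_le_sum step1) ?_
  apply Finset.sum_le_sum_of_subset_of_nonneg (Finset.filter_subset _ _)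
  intro S _ _
  positivity

lemma W_sub (h p : (Fin n → Bool) → ℝ) (S : Finset (Fin n)) :
    W (fun x => h x - p x) S = W h S - W p S := by
  rw [W, W, W, ← Finset.sum_sub_distrib]
  apply Finset.sum_congr rfl
  intro x _
  ring

/-! ### The master lemma -/

set_option maxHeartbeats 1600000 in
lemma master {n d : ℕ} (hd : 0 < d) {ε : ℝ} (hε0 : 0 < ε) (hε1 : ε < 1)
    (h : (Fin n → Bool) → ℝ) (hbool : ∀ x, h x = 1 ∨ h x = -1)
    (hOS : ∑ i : Fin n, W h {i} ≤ 2 ^ n * Real.sqrt d)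
    (hmono : ∀ i : Fin n, ∑ x, (Dv i h x) ^ 2 = W h {i}) :
    ∃ J : Finset (Fin n), (J.card : ℝ) ≤ Real.exp (20 * Real.sqrt d / ε) ∧
      ∃ p : (Fin n → Bool) → ℝ,
        (∀ x y : Fin n → Bool, (∀ i ∈ J, x i = y i) → p x = p y) ∧
        ∑ x, (h x - p x) ^ 2 ≤ ε * 2 ^ n := by
  classical
  have hd1 : (1:ℝ) ≤ (d:ℝ) := by exact_mod_cast hd
  set s := Real.sqrt d with hsdef
  have hs0 : (0:ℝ) < s := Real.sqrt_pos.mpr (by linarith)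
  have hs1 : (1:ℝ) ≤ s := by
    rw [hsdef, show (1:ℝ) = Real.sqrt 1 from (Real.sqrt_one).symm]
    exact Real.sqrt_le_sqrt hd1
  have h2n : (0:ℝ) < 2 ^ n := by positivity
  have hInn : ∀ i : Fin n, (0:ℝ) ≤ ∑ x, (Dv i h x) ^ 2 :=
    fun i => Finset.sum_nonneg fun x _ => sq_nonneg _
  have hItot : ∑ i : Fin n, (∑ x, (Dv i h x) ^ 2) ≤ 2 ^ n * s := by
    rw [Finset.sum_congr rfl fun i _ => hmono i]
    exact hOS
  set k := ⌈2 * s / ε⌉₊ with hk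
  have hkpos : 0 < k := Nat.ceil_pos.mpr (by positivity)
  have hk_lb : 2 * s / ε ≤ (k:ℝ) := Nat.le_ceil _
  have hsε : (1:ℝ) ≤ s / ε := by
    rw [le_div_iff₀ hε0]
    nlinarith
  have hk_ub : (k:ℝ) ≤ 3 * s / ε := by
    have h1 : (k:ℝ) < 2*s/ε + 1 := Nat.ceil_lt_add_one (by positivity)
    have h2 : 2*s/ε + 1 ≤ 3*s/ε := by
      have : 3*s/ε = 2*s/ε + s/ε := by ring
      linarith
    linarith
  have h3k : (0:ℝ) < 3 ^ k := by positivity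
  set σ := ε / (2 * 3 ^ k * s) with hσdef
  have hσ0 : 0 < σ := by positivity
  have h9k : (9:ℝ) ^ k = (3 ^ k) ^ 2 := by
    rw [← pow_mul, show (9:ℝ) = 3 ^ 2 from by norm_num, ← pow_mul, mul_comm]
  set J := Finset.univ.filter
    (fun i : Fin n => σ ^ 2 * 2 ^ n ≤ ∑ x, (Dv i h x) ^ 2) with hJ
  refine ⟨J, ?_, ?_⟩
  · -- cardinality bound
    have hJc : (J.card : ℝ) * (σ ^ 2 * 2 ^ n) ≤ 2 ^ n * s := by
      calc (J.card : ℝ) * (σ ^ 2 * 2 ^ n) = ∑ _i ∈ J, σ ^ 2 * 2 ^ n := by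
            rw [Finset.sum_const, nsmul_eq_mul]
        _ ≤ ∑ i ∈ J, ∑ x, (Dv i h x) ^ 2 := by
            apply Finset.sum_le_sum
            intro i hi
            exact (Finset.mem_filter.mp hi).2
        _ ≤ ∑ i : Fin n, ∑ x, (Dv i h x) ^ 2 := by
            apply Finset.sum_le_sum_of_subset_of_nonneg (Finset.subset_univ _)
            intro i _ _
            exact hInn i
        _ ≤ 2 ^ n * s := hItot
    have hcard_le : (J.card : ℝ) ≤ s / σ ^ 2 := by
      rw [le_div_iff₀ (by positivity)]
      nlinarith
    have hfrac : s / σ ^ 2 = 4 * 9 ^ k * s ^ 3 / ε ^ 2 := by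
      rw [hσdef, h9k, div_pow]
      rw [div_div_eq_mul_div]
      field_simp
      ring
    have hexp : 4 * 9 ^ k * s ^ 3 / ε ^ 2 ≤ Real.exp (20 * s / ε) := by
      have hexp1 := Real.exp_one_gt_d9
      have he2 : (4:ℝ) ≤ Real.exp 2 := by
        rw [show (2:ℝ) = 1 + 1 from by norm_num, Real.exp_add]
        nlinarith
      have he3 : (9:ℝ) ≤ Real.exp 3 := by
        rw [show (3:ℝ) = 1 + 1 + 1 from by norm_num, Real.exp_add, Real.exp_add]
        nlinarith
      have e1 : (9:ℝ) ^ k ≤ Real.exp (9 * s / ε) := by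
        calc (9:ℝ) ^ k ≤ (Real.exp 3) ^ k :=
              pow_le_pow_left₀ (by norm_num) he3 k
          _ = Real.exp (k * 3) := by
              rw [← Real.exp_nat_mul]
          _ ≤ Real.exp (9 * s / ε) := by
              apply Real.exp_le_exp.mpr
              calc (k:ℝ) * 3 ≤ (3 * s / ε) * 3 := by
                    apply mul_le_mul_of_nonneg_right hk_ub (by norm_num)
                _ = 9 * s / ε := by ring
      have e2 : s ^ 3 ≤ Real.exp (3 * s) := by
        have hse : s ≤ Real.exp s := by
          have := Real.add_one_le_exp s
          linarith
        calc s ^ 3 ≤ (Real.exp s) ^ 3 := pow_le_pow_left₀ (le_of_lt hs0) hse 3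
          _ = Real.exp ((3:ℕ) * s) := by rw [← Real.exp_nat_mul]
          _ = Real.exp (3 * s) := by norm_num
      have e3 : 1 / ε ^ 2 ≤ Real.exp (2 * s / ε) := by
        have hie : 1 / ε ≤ Real.exp (1 / ε) := by
          have := Real.add_one_le_exp (1 / ε)
          linarith
        have sq : (1 / ε) ^ 2 ≤ (Real.exp (1 / ε)) ^ 2 :=
          pow_le_pow_left₀ (by positivity) hie 2
        calc 1 / ε ^ 2 = (1 / ε) ^ 2 := by ring
          _ ≤ (Real.exp (1 / ε)) ^ 2 := sq
          _ = Real.exp ((2:ℕ) * (1 / ε)) := by rw [← Real.exp_nat_mul]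
          _ ≤ Real.exp (2 * s / ε) := by
              apply Real.exp_le_exp.mpr
              push_cast
              have h2e : 2 * (1/ε) = 2/ε := by ring
              have h2se : 2 * s / ε = (2*s)/ε := by ring
              rw [h2e, h2se, div_le_div_iff₀ hε0 hε0]
              nlinarith
      calc 4 * 9 ^ k * s ^ 3 / ε ^ 2
          = ((4 * 9 ^ k) * s ^ 3) * (1 / ε ^ 2) := by ring
        _ ≤ ((Real.exp 2 * Real.exp (9 * s / ε)) * Real.exp (3 * s))
              * Real.exp (2 * s / ε) := by
            apply mul_le_mul _ e3 (by positivity) (by positivity)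
            apply mul_le_mul _ e2 (by positivity) (by positivity)
            apply mul_le_mul he2 e1 (by positivity) (by positivity)
        _ = Real.exp (2 + 9 * s / ε + 3 * s + 2 * s / ε) := by
            rw [← Real.exp_add, ← Real.exp_add, ← Real.exp_add]
        _ ≤ Real.exp (20 * s / ε) := by
            apply Real.exp_le_exp.mpr
            have hb1 : (2:ℝ) ≤ 2 * (s / ε) := by linarith
            have hb2 : 3 * s ≤ 3 * (s / ε) := by
              have : s ≤ s / ε := by
                rw [le_div_iff₀ hε0]
                nlinarith
              linarith
            have heq : 20 * s / ε = 20 * (s / ε) := by ring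
            have heq2 : 9 * s / ε = 9 * (s / ε) := by ring
            have heq3 : 2 * s / ε = 2 * (s / ε) := by ring
            rw [heq, heq2, heq3]
            nlinarith
    calc (J.card : ℝ) ≤ s / σ ^ 2 := hcard_le
      _ = 4 * 9 ^ k * s ^ 3 / ε ^ 2 := hfrac
      _ ≤ Real.exp (20 * s / ε) := hexp
  · -- the approximating junta function
    set cJ : Finset (Fin n) → ℝ := fun S => if S ⊆ J then W h S / 2 ^ n else 0 with hcJ
    refine ⟨hS cJ, ?_, ?_⟩
    · intro x y hxy
      rw [hS, hS]
      apply Finset.sum_congr rfl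
      intro S _
      rw [hcJ]
      by_cases hSJ : S ⊆ J
      · simp only [if_pos hSJ]
        congr 1
        rw [chi, chi]
        exact Finset.prod_congr rfl fun i hi => by rw [hxy i (hSJ hi)]
      · simp [hSJ]
    · -- error bound
      have hWp : ∀ S, W (hS cJ) S = if S ⊆ J then W h S else 0 := by
        intro S
        rw [W_hS, hcJ]
        by_cases hSJ : S ⊆ J <;> simp [hSJ]
        field_simp
      have herr : 2 ^ n * ∑ x, (h x - hS cJ x) ^ 2
          = ∑ S ∈ (Finset.univ : Finset (Fin n)).powerset.filter (fun S => ¬ S ⊆ J),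
              (W h S) ^ 2 := by
        rw [← sum_sq_W (fun x => h x - hS cJ x), Finset.sum_filter]
        apply Finset.sum_congr rfl
        intro S _
        rw [W_sub, hWp S]
        by_cases hSJ : S ⊆ J <;> simp [hSJ]
      -- split into low and high degree
      have hsplit : ∑ S ∈ (Finset.univ : Finset (Fin n)).powerset.filter (fun S => ¬ S ⊆ J),
          (W h S) ^ 2
            = (∑ S ∈ (Finset.univ : Finset (Fin n)).powerset.filter
                (fun S => ¬ S ⊆ J ∧ S.card ≤ k), (W h S) ^ 2)
              + ∑ S ∈ (Finset.univ : Finset (Fin n)).powerset.filter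
                  (fun S => ¬ S ⊆ J ∧ ¬ S.card ≤ k), (W h S) ^ 2 := by
        rw [← Finset.sum_filter_add_sum_filter_not
          ((Finset.univ : Finset (Fin n)).powerset.filter (fun S => ¬ S ⊆ J))
            (fun S => S.card ≤ k), Finset.filter_filter, Finset.filter_filter]
      -- low-degree part
      have hAi : ∀ i ∈ Jᶜ, ∑ S ∈ (Finset.univ : Finset (Fin n)).powerset.filter
          (fun S => i ∈ S ∧ S.card ≤ k), (W h S) ^ 2
            ≤ 3 ^ k * 2 ^ n * σ * (∑ x, (Dv i h x) ^ 2) := by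
        intro i hi
        have hiJ : i ∉ J := Finset.mem_compl.mp hi
        have hIlt : ∑ x, (Dv i h x) ^ 2 < σ ^ 2 * 2 ^ n := by
          rw [hJ] at hiJ
          simp only [Finset.mem_filter, Finset.mem_univ, true_and] at hiJ
          exact lt_of_not_ge hiJ
        apply le_of_sq_le_sq' _ (by positivity)
        have hcube : (∑ x, (Dv i h x) ^ 2) ^ 3
            ≤ (∑ x, (Dv i h x) ^ 2) ^ 2 * (σ ^ 2 * 2 ^ n) := by
          nlinarith [hInn i, le_of_lt hIlt, sq_nonneg (∑ x, (Dv i h x) ^ 2)]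
        calc (∑ S ∈ (Finset.univ : Finset (Fin n)).powerset.filter
            (fun S => i ∈ S ∧ S.card ≤ k), (W h S) ^ 2) ^ 2
            ≤ 9 ^ k * 2 ^ n * (∑ x, (Dv i h x) ^ 2) ^ 3 := coord_tail h hbool i k
          _ ≤ 9 ^ k * 2 ^ n * ((∑ x, (Dv i h x) ^ 2) ^ 2 * (σ ^ 2 * 2 ^ n)) := by
              apply mul_le_mul_of_nonneg_left hcube (by positivity)
          _ = (3 ^ k * 2 ^ n * σ * (∑ x, (Dv i h x) ^ 2)) ^ 2 := by
              rw [h9k]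
              ring
      have hlow : ∑ S ∈ (Finset.univ : Finset (Fin n)).powerset.filter
          (fun S => ¬ S ⊆ J ∧ S.card ≤ k), (W h S) ^ 2
            ≤ 2 ^ n * (2 ^ n * (ε / 2)) := by
        have hσs : 3 ^ k * σ * s = ε / 2 := by
          rw [hσdef]
          field_simp
        calc (∑ S ∈ (Finset.univ : Finset (Fin n)).powerset.filter
            (fun S => ¬ S ⊆ J ∧ S.card ≤ k), (W h S) ^ 2)
            ≤ ∑ i ∈ Jᶜ, ∑ S ∈ (Finset.univ : Finset (Fin n)).powerset.filter
                (fun S => i ∈ S ∧ S.card ≤ k), (W h S) ^ 2 := tail_low h J k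
          _ ≤ ∑ i ∈ Jᶜ, 3 ^ k * 2 ^ n * σ * (∑ x, (Dv i h x) ^ 2) :=
              Finset.sum_le_sum hAi
          _ = 3 ^ k * 2 ^ n * σ * ∑ i ∈ Jᶜ, (∑ x, (Dv i h x) ^ 2) := by
              rw [Finset.mul_sum]
          _ ≤ 3 ^ k * 2 ^ n * σ * ∑ i : Fin n, (∑ x, (Dv i h x) ^ 2) := by
              apply mul_le_mul_of_nonneg_left _ (by positivity)
              apply Finset.sum_le_sum_of_subset_of_nonneg (Finset.subset_univ _)
              intro i _ _
              exact hInn i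
          _ ≤ 3 ^ k * 2 ^ n * σ * (2 ^ n * s) := by
              apply mul_le_mul_of_nonneg_left hItot (by positivity)
          _ = 2 ^ n * (2 ^ n * (3 ^ k * σ * s)) := by ring
          _ = 2 ^ n * (2 ^ n * (ε / 2)) := by rw [hσs]
      -- high-degree part
      have hhigh : ∑ S ∈ (Finset.univ : Finset (Fin n)).powerset.filter
          (fun S => ¬ S ⊆ J ∧ ¬ S.card ≤ k), (W h S) ^ 2
            ≤ 2 ^ n * (2 ^ n * (ε / 2)) := by
        have hsub : ∑ S ∈ (Finset.univ : Finset (Fin n)).powerset.filter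
            (fun S => ¬ S ⊆ J ∧ ¬ S.card ≤ k), (W h S) ^ 2
              ≤ ∑ S ∈ (Finset.univ : Finset (Fin n)).powerset.filter
                  (fun S => ¬ S.card ≤ k), (W h S) ^ 2 := by
          apply Finset.sum_le_sum_of_subset_of_nonneg
          · intro S hS
            simp only [Finset.mem_filter] at hS ⊢
            exact ⟨hS.1, hS.2.2⟩
          · intro S _ _
            exact sq_nonneg _
        have htot : ∑ S ∈ (Finset.univ : Finset (Fin n)).powerset,
            (S.card : ℝ) * (W h S) ^ 2 ≤ 2 ^ n * (2 ^ n * s) := by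
          rw [total_influence h]
          calc ∑ i : Fin n, 2 ^ n * ∑ x, (Dv i h x) ^ 2
              = 2 ^ n * ∑ i : Fin n, (∑ x, (Dv i h x) ^ 2) := by
                rw [Finset.mul_sum]
            _ ≤ 2 ^ n * (2 ^ n * s) := by
                apply mul_le_mul_of_nonneg_left hItot (le_of_lt h2n)
        have hks : s / k ≤ ε / 2 := by
          rw [div_le_iff₀ (by exact_mod_cast hkpos)]
          rw [div_le_iff₀ hε0] at hk_lb
          nlinarith [hk_lb]
        have hth := tail_high h (n := n) k
        have hknn : (0:ℝ) < (k:ℝ) := by exact_mod_cast hkpos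
        calc (∑ S ∈ (Finset.univ : Finset (Fin n)).powerset.filter
            (fun S => ¬ S ⊆ J ∧ ¬ S.card ≤ k), (W h S) ^ 2)
            ≤ ∑ S ∈ (Finset.univ : Finset (Fin n)).powerset.filter
                (fun S => ¬ S.card ≤ k), (W h S) ^ 2 := hsub
          _ ≤ 2 ^ n * (2 ^ n * s) / k := by
              rw [le_div_iff₀ hknn]
              calc (∑ S ∈ (Finset.univ : Finset (Fin n)).powerset.filter
                  (fun S => ¬ S.card ≤ k), (W h S) ^ 2) * k
                  = k * ∑ S ∈ (Finset.univ : Finset (Fin n)).powerset.filter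
                      (fun S => ¬ S.card ≤ k), (W h S) ^ 2 := by ring
                _ ≤ ∑ S ∈ (Finset.univ : Finset (Fin n)).powerset,
                      (S.card : ℝ) * (W h S) ^ 2 := hth
                _ ≤ 2 ^ n * (2 ^ n * s) := htot
          _ = 2 ^ n * (2 ^ n * (s / k)) := by ring
          _ ≤ 2 ^ n * (2 ^ n * (ε / 2)) := by
              apply mul_le_mul_of_nonneg_left _ (le_of_lt h2n)
              apply mul_le_mul_of_nonneg_left hks (le_of_lt h2n)
      -- combine
      have htotal : 2 ^ n * ∑ x, (h x - hS cJ x) ^ 2 ≤ 2 ^ n * (ε * 2 ^ n) := by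
        rw [herr, hsplit]
        calc (∑ S ∈ (Finset.univ : Finset (Fin n)).powerset.filter
            (fun S => ¬ S ⊆ J ∧ S.card ≤ k), (W h S) ^ 2)
              + ∑ S ∈ (Finset.univ : Finset (Fin n)).powerset.filter
                  (fun S => ¬ S ⊆ J ∧ ¬ S.card ≤ k), (W h S) ^ 2
            ≤ 2 ^ n * (2 ^ n * (ε / 2)) + 2 ^ n * (2 ^ n * (ε / 2)) :=
              add_le_add hlow hhigh
          _ = 2 ^ n * (ε * 2 ^ n) := by ring
      exact le_of_mul_le_mul_left htotal h2n

end JuntaProof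

/-- `g` is a `k`-junta if it depends on at most `k` coordinates. -/
def IsJunta {ι : Type} (g : (ι → Bool) → Bool) (k : ℕ) : Prop :=
  ∃ J : Finset ι, J.card ≤ k ∧
    ∀ x y : ι → Bool, (∀ i ∈ J, x i = y i) → g x = g y

open JuntaProof in
/-- There is an absolute constant `C > 0` such that every monotone `f : {0,1}^n → {0,1}`
computed by a depth-`d` decision tree is `ε`-approximated by a `k`-junta with
`k ≤ exp(C·√d/ε)`. -/
theorem monotone_low_depth_junta_approx :
    ∃ C : ℝ, 0 < C ∧ ∀ d : ℕ, 0 < d → ∀ ε : ℝ, ε ∈ Set.Ioo (0 : ℝ) 1 →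
      ∀ n : ℕ, 0 < n → ∀ f : (Fin n → Bool) → Bool, Monotone f →
        (∃ tr : DTree (Fin n), tr.depth ≤ d ∧ ∀ x, tr.eval x = f x) →
        ∃ k : ℕ, (k : ℝ) ≤ Real.exp (C * Real.sqrt d / ε) ∧
          ∃ g : (Fin n → Bool) → Bool, IsJunta g k ∧
            ((Finset.univ.filter (fun x => f x ≠ g x)).card : ℝ) / 2 ^ n ≤ ε := by
  classical
  refine ⟨20, by norm_num, ?_⟩
  intro d hd ε hε n _hn f hf ⟨tr, htr, heval⟩
  obtain ⟨hε0, hε1⟩ := hε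
  -- the ±1 version of f
  set h : (Fin n → Bool) → ℝ := fun y => bsign (f y) with hh
  have hbool : ∀ x, h x = 1 ∨ h x = -1 := by
    intro x
    rw [hh]
    cases hfx : f x <;> simp [bsign, hfx]
  -- the reduced tree
  set t := reduce tr (fun _ => none) with ht
  have hte : ∀ x, t.eval x = f x := by
    intro x
    rw [ht, eval_reduce tr _ x (fun j b hj => by simp at hj), heval x]
  have hhR : evalR t = h := funext fun x => by rw [evalR, hte x, hh]
  have hred : Reduced t := reduced_reduce tr _
  have hdep : t.depth ≤ d := le_trans (depth_reduce tr _) htr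
  have hOS : ∑ i : Fin n, W h {i} ≤ 2 ^ n * Real.sqrt d := by
    rw [← hhR]
    exact os_bound hred hdep
  have hmono : ∀ i : Fin n, ∑ x, (Dv i h x) ^ 2 = W h {i} := by
    intro i
    rw [hh]
    exact mono_inf hf i
  obtain ⟨J, hJcard, p, hjunta, herr⟩ := master hd hε0 hε1 h hbool hOS hmono
  refine ⟨J.card, by simpa using hJcard, ?_⟩
  set g : (Fin n → Bool) → Bool := fun x => if 0 ≤ p x then true else false with hg
  refine ⟨g, ⟨J, le_rfl, ?_⟩, ?_⟩
  · intro x y hxy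
    rw [hg]
    simp only
    rw [hjunta x y hxy]
  · -- error probability
    have hcount : ((Finset.univ.filter (fun x => f x ≠ g x)).card : ℝ)
        ≤ ∑ x, (h x - p x) ^ 2 := by
      have e1 : ((Finset.univ.filter (fun x => f x ≠ g x)).card : ℝ)
          = ∑ x : Fin n → Bool, (if f x ≠ g x then (1:ℝ) else 0) := by
        rw [Finset.card_filter]
        push_cast
        rfl
      rw [e1]
      apply Finset.sum_le_sum
      intro x _
      by_cases hne : f x ≠ g x
      · rw [if_pos hne]
        have hgx : g x = true ↔ 0 ≤ p x := by
          rw [hg]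
          simp only
          by_cases h0 : 0 ≤ p x <;> simp [h0]
        cases hfx : f x
        · -- f x = false, so g x = true, so 0 ≤ p x, and h x = -1
          have hgt : g x = true := by
            cases hgxv : g x
            · exact absurd (by rw [hfx, hgxv]) hne
            · rfl
          have hp0 : 0 ≤ p x := hgx.mp hgt
          have hhx : h x = -1 := by rw [hh]; simp [bsign, hfx]
          rw [hhx]
          nlinarith
        · -- f x = true, so g x = false, so p x < 0, and h x = 1
          have hgt : g x = false := by
            cases hgxv : g x
            · rfl
            · exact absurd (by rw [hfx, hgxv]) hne
          have hp0 : p x < 0 := by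
            by_contra hcon
            push_neg at hcon
            have := hgx.mpr hcon
            rw [hgt] at this
            exact absurd this (by simp)
          have hhx : h x = 1 := by rw [hh]; simp [bsign, hfx]
          rw [hhx]
          nlinarith
      · rw [if_neg hne]
        exact sq_nonneg _
    have h2n : (0:ℝ) < 2 ^ n := by positivity
    rw [div_le_iff₀ h2n]
    calc ((Finset.univ.filter (fun x => f x ≠ g x)).card : ℝ)
        ≤ ∑ x, (h x - p x) ^ 2 := hcount
      _ ≤ ε * 2 ^ n := herr
end

section
/- There is an absolute constant C > 0 such that for every positive integer d, the monotone addressing function A_d : {0,1}^{d−1} × {0,1}^{2^{d−1}} → {0,1} is monotone, is computed by a decision tree of depth at most d, and satisfies Pr_{(x,y) uniform}[ A_d(x,y) ≠ Maj(x) ] ≤ C/√d, where Maj(x) = 1 if Σ_{i=1}^{d−1} x_i > ⌊(d−1)/2⌋ and Maj(x) = 0 otherwise. -/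
/-- The Hamming weight of `x ∈ {0,1}^n`. -/
def wt {n : ℕ} (x : Fin n → Bool) : ℕ := ∑ i, if x i then 1 else 0

/-- The monotone addressing function: `1` if `wt x > ⌊n/2⌋`, `0` if `wt x < ⌊n/2⌋`, and
the `y`-coordinate addressed by the string `x` if `wt x = ⌊n/2⌋`. -/
def Aaddr {n : ℕ} (x : Fin n → Bool) (y : (Fin n → Bool) → Bool) : Bool :=
  if n / 2 < wt x then true
  else if wt x < n / 2 then false
  else y x

/-- The majority-type function `Maj(x) = 1` iff `wt x > ⌊n/2⌋`. -/
def MajF {n : ℕ} (x : Fin n → Bool) : Bool := decide (n / 2 < wt x)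

/-! ### Auxiliary lemmas -/

lemma cb_sq (m : ℕ) : (Nat.centralBinom m)^2 * (2*m+1) ≤ 16^m := by
  induction m with
  | zero => simp [Nat.centralBinom]
  | succ m ih =>
    have h1 := Nat.succ_mul_centralBinom_succ m
    have hpos : 0 < (m+1)^2 := by positivity
    refine Nat.le_of_mul_le_mul_left ?_ hpos
    have e : (m+1)^2 * ((Nat.centralBinom (m+1))^2 * (2*(m+1)+1)) =
        (2*(2*m+1))^2 * (Nat.centralBinom m)^2 * (2*m+3) := by
      have : ((m+1) * Nat.centralBinom (m+1))^2 = (2*(2*m+1) * Nat.centralBinom m)^2 := by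
        rw [h1]
      ring_nf
      ring_nf at this
      nlinarith [this]
    rw [e]
    calc (2*(2*m+1))^2 * (Nat.centralBinom m)^2 * (2*m+3)
        = (4*(2*m+1)*(2*m+3)) * ((Nat.centralBinom m)^2 * (2*m+1)) := by ring
      _ ≤ (4*(2*m+1)*(2*m+3)) * 16^m := Nat.mul_le_mul_left _ ih
      _ ≤ ((m+1)^2 * 16) * 16^m := by nlinarith
      _ = (m+1)^2 * 16^(m+1) := by ring

lemma choose_half_sq (n : ℕ) : (n.choose (n/2))^2 * (n+1) ≤ 4^n := by
  rcases Nat.even_or_odd n with ⟨m, hm⟩ | ⟨m, hm⟩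
  · subst hm
    have : (2*m)/2 = m := by omega
    rw [show m+m = 2*m by ring] at *
    rw [this]
    have := cb_sq m
    rw [Nat.centralBinom] at this
    calc ((2*m).choose m)^2 * (2*m+1) ≤ 16^m := this
      _ = 4^(2*m) := by rw [pow_mul]; norm_num
  · subst hm
    have hdiv : (2*m+1)/2 = m := by omega
    rw [hdiv]
    have hsymm : (2*m+1).choose (m+1) = (2*m+1).choose m := by
      have := Nat.choose_symm (n := 2*m+1) (k := m+1) (by omega)
      rw [show 2*m+1-(m+1) = m by omega] at this
      exact this.symm
    have hpas : (2*(m+1)).choose (m+1) = (2*m+1).choose m + (2*m+1).choose (m+1) := by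
      rw [show 2*(m+1) = (2*m+1)+1 by ring]
      exact Nat.choose_succ_succ (2*m+1) m
    have h2 : 2 * (2*m+1).choose m = Nat.centralBinom (m+1) := by
      rw [Nat.centralBinom, hpas, hsymm]; ring
    have := cb_sq (m+1)
    have key : 4 * ((2*m+1).choose m)^2 * (2*(m+1)+1) ≤ 16^(m+1) := by
      calc 4 * ((2*m+1).choose m)^2 * (2*(m+1)+1)
          = (2 * (2*m+1).choose m)^2 * (2*(m+1)+1) := by ring
        _ = (Nat.centralBinom (m+1))^2 * (2*(m+1)+1) := by rw [h2]
        _ ≤ 16^(m+1) := this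
    have h16 : 16^(m+1) = 4 * 4^(2*m+1) := by
      rw [show (16:ℕ) = 4^2 by norm_num, ← pow_mul,
        show 2*(m+1) = 2*m+1+1 by ring, pow_succ]
      ring
    nlinarith [key]

lemma wt_eq_card {n : ℕ} (x : Fin n → Bool) :
    wt x = (Finset.univ.filter fun i => x i = true).card := by
  rw [Finset.card_filter]; rfl

lemma card_wt (n k : ℕ) :
    (Finset.univ.filter fun x : Fin n → Bool => wt x = k).card = n.choose k := by
  have hpc : (Finset.powersetCard k (Finset.univ : Finset (Fin n))).card = n.choose k := by
    rw [Finset.card_powersetCard, Finset.card_univ, Fintype.card_fin]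
  rw [← hpc]
  refine Finset.card_bij' (fun x _ => Finset.univ.filter fun i => x i = true)
    (fun s _ => fun i => decide (i ∈ s)) ?_ ?_ ?_ ?_
  · intro x hx
    simp only [Finset.mem_filter, Finset.mem_univ, true_and] at hx
    simp [Finset.mem_powersetCard, ← wt_eq_card, hx]
  · intro s hs
    simp only [Finset.mem_powersetCard] at hs
    simp only [Finset.mem_filter, Finset.mem_univ, true_and, wt_eq_card]
    rw [← hs.2]
    congr 1
    ext i
    simp
  · intro x hx
    funext i
    simp
  · intro s hs
    ext i
    simp

lemma wt_mono {n : ℕ} {x x' : Fin n → Bool} (h : x ≤ x') : wt x ≤ wt x' := by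
  refine Finset.sum_le_sum fun i _ => ?_
  cases hxi : x i
  · simp
  · rw [Bool.le_iff_imp.mp (h i) hxi]

lemma wt_eq_imp_eq {n : ℕ} {x x' : Fin n → Bool} (h : x ≤ x') (hw : wt x = wt x') :
    x = x' := by
  by_contra hne
  have : ∃ i, x i ≠ x' i := by
    by_contra hc
    push_neg at hc
    exact hne (funext hc)
  obtain ⟨i, hi⟩ := this
  have hxi : x i = false ∧ x' i = true := by
    cases hxi : x i
    · cases hxi' : x' i
      · exact absurd (hxi.trans hxi'.symm) hi
      · exact ⟨rfl, rfl⟩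
    · exact absurd ((Bool.le_iff_imp.mp (h i) hxi).trans hxi.symm).symm hi
  have : wt x < wt x' := by
    refine Finset.sum_lt_sum (fun j _ => ?_) ⟨i, Finset.mem_univ i, ?_⟩
    · cases hxj : x j
      · simp
      · rw [Bool.le_iff_imp.mp (h j) hxj]
    · simp [hxi.1, hxi.2]
  omega

/-- The "leaf gadget" for the addressing tree. -/
def addrLeaf {n : ℕ} (x : Fin n → Bool) : DTree (Sum (Fin n) (Fin n → Bool)) :=
  if n / 2 < wt x then .leaf true
  else if wt x < n / 2 then .leaf false
  else .node (Sum.inr x) (.leaf false) (.leaf true)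

lemma addrLeaf_depth {n : ℕ} (x : Fin n → Bool) : (addrLeaf x).depth ≤ 1 := by
  unfold addrLeaf
  split_ifs <;> simp [DTree.depth]

lemma addrLeaf_eval {n : ℕ} (x : Fin n → Bool) (y : (Fin n → Bool) → Bool) :
    (addrLeaf x).eval (Sum.elim x y) = Aaddr x y := by
  unfold addrLeaf Aaddr
  split_ifs <;> simp [DTree.eval] <;> by_cases h : y x = true <;> simp [h]

def buildX {ι : Type} : (m : ℕ) → (Fin m → ι) → ((Fin m → Bool) → DTree ι) → DTree ι
  | 0, _, g => g (fun i => i.elim0)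
  | m+1, q, g =>
      .node (q 0)
        (buildX m (fun i => q i.succ) (fun v => g (Fin.cons false v)))
        (buildX m (fun i => q i.succ) (fun v => g (Fin.cons true v)))

lemma buildX_eval {ι : Type} : ∀ (m : ℕ) (q : Fin m → ι)
    (g : (Fin m → Bool) → DTree ι) (z : ι → Bool),
    (buildX m q g).eval z = (g (fun i => z (q i))).eval z := by
  intro m
  induction m with
  | zero =>
    intro q g z
    simp only [buildX]
    exact congrArg (fun v => (g v).eval z) (funext fun i => i.elim0)
  | succ m ih =>
    intro q g z
    simp only [buildX, DTree.eval]
    have key : ∀ b, z (q 0) = b →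
        Fin.cons b (fun i : Fin m => z (q i.succ)) = (fun i : Fin (m+1) => z (q i)) := by
      intro b hb
      funext i
      refine Fin.cases ?_ ?_ i
      · simpa using hb.symm
      · intro j; simp
    cases hz : z (q 0) with
    | false => rw [if_neg (by simp), ih, key false hz]
    | true => rw [if_pos rfl, ih, key true hz]

lemma buildX_depth {ι : Type} : ∀ (m : ℕ) (q : Fin m → ι)
    (g : (Fin m → Bool) → DTree ι) (D : ℕ), (∀ v, (g v).depth ≤ D) →
    (buildX m q g).depth ≤ m + D := by
  intro m
  induction m with
  | zero => intro q g D hg; simpa [buildX] using hg _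
  | succ m ih =>
    intro q g D hg
    simp only [buildX, DTree.depth]
    have h0 := ih (fun i => q i.succ) (fun v => g (Fin.cons false v)) D (fun v => hg _)
    have h1 := ih (fun i => q i.succ) (fun v => g (Fin.cons true v)) D (fun v => hg _)
    omega

/-- There is an absolute constant `C > 0` such that for every `d ≥ 1`, the monotone
addressing function `A_d : {0,1}^{d−1} × {0,1}^{2^{d−1}} → {0,1}` is monotone, is computed
by a decision tree of depth at most `d`, and agrees with `Maj` except on a set of measure
at most `C/√d`. -/
theorem monotone_addressing_props :
    ∃ C : ℝ, 0 < C ∧ ∀ d : ℕ, 0 < d →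
      (∀ (x x' : Fin (d - 1) → Bool) (y y' : (Fin (d - 1) → Bool) → Bool),
          x ≤ x' → y ≤ y' → Aaddr x y ≤ Aaddr x' y') ∧
      (∃ tr : DTree (Sum (Fin (d - 1)) (Fin (d - 1) → Bool)), tr.depth ≤ d ∧
          ∀ (x : Fin (d - 1) → Bool) (y : (Fin (d - 1) → Bool) → Bool),
            tr.eval (Sum.elim x y) = Aaddr x y) ∧
      ((Finset.univ.filter
            (fun p : (Fin (d - 1) → Bool) × ((Fin (d - 1) → Bool) → Bool) =>
              Aaddr p.1 p.2 ≠ MajF p.1)).card : ℝ)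
          / (2 ^ (d - 1) * 2 ^ (2 ^ (d - 1)))
        ≤ C / Real.sqrt d := by
  refine ⟨1, one_pos, fun d hd => ?_⟩
  set n := d - 1 with hn
  refine ⟨?_, ?_, ?_⟩
  · -- monotonicity
    intro x x' y y' hx hy
    rw [Bool.le_iff_imp]
    intro hA
    have hww : wt x ≤ wt x' := wt_mono hx
    by_cases h1 : n / 2 < wt x
    · have h1' : n / 2 < wt x' := lt_of_lt_of_le h1 hww
      simp [Aaddr, h1']
    · by_cases h2 : wt x < n / 2
      · unfold Aaddr at hA
        rw [if_neg h1, if_pos h2] at hA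
        exact absurd hA (by simp)
      · have hyx : y x = true := by
          unfold Aaddr at hA
          rwa [if_neg h1, if_neg h2] at hA
        by_cases h3 : n / 2 < wt x'
        · simp [Aaddr, h3]
        · have hxx : x = x' := wt_eq_imp_eq hx (by omega)
          unfold Aaddr
          rw [if_neg h3, if_neg (by omega)]
          rw [← hxx]
          exact Bool.le_iff_imp.mp (hy x) hyx
  · -- decision tree
    refine ⟨buildX n Sum.inl (fun v => addrLeaf v), ?_, ?_⟩
    · calc (buildX n Sum.inl (fun v => addrLeaf v)).depth
          ≤ n + 1 := buildX_depth n _ _ 1 (fun v => addrLeaf_depth v)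
        _ ≤ d := by omega
    · intro x y
      rw [buildX_eval]
      exact addrLeaf_eval x y
  · -- probability bound
    have hsub : (Finset.univ.filter
        (fun p : (Fin n → Bool) × ((Fin n → Bool) → Bool) =>
          Aaddr p.1 p.2 ≠ MajF p.1)) ⊆
        (Finset.univ.filter
          (fun p : (Fin n → Bool) × ((Fin n → Bool) → Bool) => wt p.1 = n / 2)) := by
      intro p hp
      simp only [Finset.mem_filter, Finset.mem_univ, true_and] at hp ⊢
      by_contra hne
      apply hp
      unfold Aaddr MajF
      rcases lt_trichotomy (n / 2) (wt p.1) with h | h | h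
      · simp [h]
      · exact absurd h.symm hne
      · rw [if_neg (by omega), if_pos h]
        simp [show ¬ n / 2 < wt p.1 by omega]
    have hprod : (Finset.univ.filter
          (fun p : (Fin n → Bool) × ((Fin n → Bool) → Bool) => wt p.1 = n / 2)) =
        (Finset.univ.filter fun x : Fin n → Bool => wt x = n / 2) ×ˢ
          (Finset.univ : Finset ((Fin n → Bool) → Bool)) := by
      ext p
      simp [Finset.mem_product]
    have hcardle : (Finset.univ.filter
        (fun p : (Fin n → Bool) × ((Fin n → Bool) → Bool) =>
          Aaddr p.1 p.2 ≠ MajF p.1)).card ≤ n.choose (n / 2) * 2 ^ (2 ^ n) := by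
      calc _ ≤ _ := Finset.card_le_card hsub
        _ = n.choose (n / 2) * 2 ^ (2 ^ n) := by
          rw [hprod, Finset.card_product, card_wt, Finset.card_univ]
          congr 1
          rw [Fintype.card_fun]
          simp [Fintype.card_fun]
    -- now the real arithmetic
    have hd1 : (n : ℝ) + 1 = (d : ℝ) := by
      have : n + 1 = d := by omega
      exact_mod_cast this
    have hsq : ((n.choose (n / 2) : ℝ)) * Real.sqrt d ≤ 2 ^ n := by
      have hkey : ((n.choose (n / 2) : ℝ))^2 * ((n : ℝ) + 1) ≤ 4 ^ n := by
        have := choose_half_sq n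
        have h' : ((n.choose (n/2))^2 * (n+1) : ℝ) ≤ (4:ℝ)^n := by exact_mod_cast this
        push_cast at h'
        linarith
      have h2 : ((n.choose (n / 2) : ℝ) * Real.sqrt d)^2 ≤ ((2:ℝ) ^ n)^2 := by
        rw [mul_pow, Real.sq_sqrt (by positivity)]
        calc ((n.choose (n / 2) : ℝ))^2 * (d:ℝ)
            = ((n.choose (n / 2) : ℝ))^2 * ((n:ℝ)+1) := by rw [hd1]
          _ ≤ 4 ^ n := hkey
          _ = ((2:ℝ)^n)^2 := by rw [show (4:ℝ) = 2^2 by norm_num, ← pow_mul, ← pow_mul, mul_comm 2 n]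
      have hnn : 0 ≤ (n.choose (n / 2) : ℝ) * Real.sqrt d := by positivity
      calc (n.choose (n / 2) : ℝ) * Real.sqrt d
          = Real.sqrt (((n.choose (n / 2) : ℝ) * Real.sqrt d)^2) := (Real.sqrt_sq hnn).symm
        _ ≤ Real.sqrt (((2:ℝ)^n)^2) := Real.sqrt_le_sqrt h2
        _ = 2 ^ n := Real.sqrt_sq (by positivity)
    have hsqrtd : (0:ℝ) < Real.sqrt d := Real.sqrt_pos.mpr (by exact_mod_cast hd)
    rw [div_le_div_iff₀ (by positivity) hsqrtd]
    calc ((Finset.univ.filter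
            (fun p : (Fin n → Bool) × ((Fin n → Bool) → Bool) =>
              Aaddr p.1 p.2 ≠ MajF p.1)).card : ℝ) * Real.sqrt d
        ≤ ((n.choose (n / 2) * 2 ^ (2 ^ n) : ℕ) : ℝ) * Real.sqrt d := by
          exact mul_le_mul_of_nonneg_right (by exact_mod_cast hcardle) hsqrtd.le
      _ = ((n.choose (n / 2) : ℝ) * Real.sqrt d) * 2 ^ (2 ^ n) := by push_cast; ring
      _ ≤ (2:ℝ)^n * 2 ^ (2 ^ n) := by
          have h2n : (0:ℝ) ≤ 2 ^ (2^n : ℕ) := by positivity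
          exact mul_le_mul_of_nonneg_right hsq h2n
      _ = 1 * (2 ^ n * 2 ^ (2 ^ n)) := by ring
end
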